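/- Let a, b, c, d, e, f, g be nonnegative real numbers and set Λ := aζ1 + bζ2 + cζ3 + dζ4 + eζ5 + fζ6 + gζ7. If at least one of the sixteen sums a+c, b+d, c+d, d+e, e+f, f+g, a+b+e, a+b+f, a+b+g, a+d+f, a+d+g, a+e+g, b+c+e, b+c+f, b+c+g, c+e+g equals 0, then for every w ∈ W there exists some i ∈ {1,…,6} with ⟨wΛ,γi⟩ ≤ 0; in other words, no element of the orbit W·Λ is strictly Δ⁺(k)-dominant. (This is the combinatorial content of Lemma 3.1, which forces the listed sums to be positive for the infinitesimal character of any Dirac series representation of E7(−25).) -/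
import Mathlib


open scoped BigOperators

namespace E7

noncomputable section

/-- The standard inner product on ℝ⁸. -/
def ip (x y : Fin 8 → ℝ) : ℝ := ∑ i, x i * y i

/-- The simple roots α₁,…,α₇ of E₇ (indexed by `Fin 7`). -/
def sroot : Fin 7 → Fin 8 → ℝ :=
  ![![1/2, -1/2, -1/2, -1/2, -1/2, -1/2, -1/2, 1/2],
    ![1, 1, 0, 0, 0, 0, 0, 0],
    ![-1, 1, 0, 0, 0, 0, 0, 0],
    ![0, -1, 1, 0, 0, 0, 0, 0],
    ![0, 0, -1, 1, 0, 0, 0, 0],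
    ![0, 0, 0, -1, 1, 0, 0, 0],
    ![0, 0, 0, 0, -1, 1, 0, 0]]

/-- The root lattice `Q`: integer linear combinations of the simple roots. -/
def latQ : Set (Fin 8 → ℝ) := {v | ∃ c : Fin 7 → ℤ, v = ∑ j, (c j : ℝ) • sroot j}

/-- The E₇ root system `Φ = {v ∈ Q : ⟨v,v⟩ = 2}`. -/
def Phi : Set (Fin 8 → ℝ) := {v | v ∈ latQ ∧ ip v v = 2}

/-- The vector ζ. -/
def zeta : Fin 8 → ℝ := ![0, 0, 0, 0, 0, 1, -1/2, 1/2]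

/-- The positive roots Δ⁺: roots that are nonnegative integer combinations
of the simple roots. -/
def PhiPos : Set (Fin 8 → ℝ) :=
  {v | v ∈ Phi ∧ ∃ c : Fin 7 → ℕ, v = ∑ j, (c j : ℝ) • sroot j}

/-- The compact positive roots Δ⁺(k) = {α ∈ Δ⁺ : ⟨α,ζ⟩ = 0}. -/
def PhiPosK : Set (Fin 8 → ℝ) := {v | v ∈ PhiPos ∧ ip v zeta = 0}

/-- The Weyl group `W` of E₇: the subgroup of linear automorphisms of ℝ⁸
generated by the reflections `s_α : v ↦ v − ⟨v,α⟩α` for `α ∈ Φ`. -/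
def W : Subgroup ((Fin 8 → ℝ) ≃ₗ[ℝ] (Fin 8 → ℝ)) :=
  Subgroup.closure {g | ∃ a ∈ Phi, ∀ v, g v = v - ip v a • a}

/-- The subgroup of `W` generated by the six compact simple reflections
`s_{γ₁},…,s_{γ₆}` (the Weyl group of E₆, i.e. of k). -/
def WK : Subgroup ((Fin 8 → ℝ) ≃ₗ[ℝ] (Fin 8 → ℝ)) :=
  Subgroup.closure
    {g | ∃ i : Fin 6, ∀ v, g v = v - ip v (sroot i.castSucc) • sroot i.castSucc}

end

-- Gram matrix
def G : Fin 7 → Fin 7 → ℤ :=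
  ![![2,0,-1,0,0,0,0],
    ![0,2,0,-1,0,0,0],
    ![-1,0,2,-1,0,0,0],
    ![0,-1,-1,2,-1,0,0],
    ![0,0,0,-1,2,-1,0],
    ![0,0,0,0,-1,2,-1],
    ![0,0,0,0,0,-1,2]]

lemma ip_comm (x y : Fin 8 → ℝ) : ip x y = ip y x := by
  simp [ip, mul_comm]

lemma ip_add_left (x y z : Fin 8 → ℝ) : ip (x + y) z = ip x z + ip y z := by
  simp [ip, add_mul, Finset.sum_add_distrib]

lemma ip_sub_left (x y z : Fin 8 → ℝ) : ip (x - y) z = ip x z - ip y z := by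
  simp [ip, sub_mul, Finset.sum_sub_distrib]

lemma ip_neg_left (x z : Fin 8 → ℝ) : ip (-x) z = - ip x z := by
  simp [ip]

lemma ip_neg_right (x z : Fin 8 → ℝ) : ip z (-x) = - ip z x := by
  simp [ip]

lemma ip_smul_left (r : ℝ) (x z : Fin 8 → ℝ) : ip (r • x) z = r * ip x z := by
  simp [ip, Finset.mul_sum, mul_assoc]

lemma ip_add_right (x y z : Fin 8 → ℝ) : ip z (x + y) = ip z x + ip z y := by
  rw [ip_comm, ip_add_left, ip_comm x z, ip_comm y z]

lemma ip_sub_right (x y z : Fin 8 → ℝ) : ip z (x - y) = ip z x - ip z y := by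
  rw [ip_comm, ip_sub_left, ip_comm x z, ip_comm y z]

lemma ip_smul_right (r : ℝ) (x z : Fin 8 → ℝ) : ip z (r • x) = r * ip z x := by
  rw [ip_comm, ip_smul_left, ip_comm x z]

lemma ip_sum_left {ι : Type*} (s : Finset ι) (f : ι → Fin 8 → ℝ) (z : Fin 8 → ℝ) :
    ip (∑ j ∈ s, f j) z = ∑ j ∈ s, ip (f j) z := by
  simp only [ip, Finset.sum_apply, Finset.sum_mul]
  exact Finset.sum_comm

lemma ip_sum_right {ι : Type*} (s : Finset ι) (f : ι → Fin 8 → ℝ) (z : Fin 8 → ℝ) :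
    ip z (∑ j ∈ s, f j) = ∑ j ∈ s, ip z (f j) := by
  rw [ip_comm, ip_sum_left]
  simp [ip_comm]

lemma gram (i j : Fin 7) : ip (sroot i) (sroot j) = (G i j : ℝ) := by
  fin_cases i <;> fin_cases j <;> norm_num [ip, sroot, G, Fin.sum_univ_succ]

lemma ip_comb_left (r : Fin 7 → ℝ) (z : Fin 8 → ℝ) :
    ip (∑ j, r j • sroot j) z = ∑ j, r j * ip (sroot j) z := by
  rw [ip_sum_left]; simp [ip_smul_left]

lemma ip_comb_right (r : Fin 7 → ℝ) (z : Fin 8 → ℝ) :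
    ip z (∑ j, r j • sroot j) = ∑ j, r j * ip z (sroot j) := by
  rw [ip_sum_right]; simp [ip_smul_right]

lemma ip_comb_comb (r t : Fin 7 → ℝ) :
    ip (∑ j, r j • sroot j) (∑ j, t j • sroot j)
      = ∑ j, ∑ k, r j * t k * (G j k : ℝ) := by
  rw [ip_comb_left]
  refine Finset.sum_congr rfl fun j _ => ?_
  rw [ip_comb_right, Finset.mul_sum]
  refine Finset.sum_congr rfl fun k _ => ?_
  rw [gram]; ring

lemma latQ_comb (c : Fin 7 → ℤ) : (∑ j, (c j : ℝ) • sroot j) ∈ latQ := ⟨c, rfl⟩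

lemma latQ_add {v w : Fin 8 → ℝ} (hv : v ∈ latQ) (hw : w ∈ latQ) : v + w ∈ latQ := by
  obtain ⟨c, rfl⟩ := hv; obtain ⟨d, rfl⟩ := hw
  refine ⟨c + d, ?_⟩
  rw [← Finset.sum_add_distrib]
  refine Finset.sum_congr rfl fun j _ => ?_
  push_cast [Pi.add_apply]
  rw [add_smul]

lemma latQ_sub_zsmul {v w : Fin 8 → ℝ} (hv : v ∈ latQ) (hw : w ∈ latQ) (n : ℤ) :
    v - (n : ℝ) • w ∈ latQ := by
  obtain ⟨c, rfl⟩ := hv; obtain ⟨d, rfl⟩ := hw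
  refine ⟨c - n • d, ?_⟩
  rw [Finset.smul_sum, ← Finset.sum_sub_distrib]
  refine Finset.sum_congr rfl fun j _ => ?_
  push_cast [Pi.sub_apply, Pi.smul_apply, smul_eq_mul]
  rw [sub_smul, smul_smul]

lemma latQ_neg {v : Fin 8 → ℝ} (hv : v ∈ latQ) : -v ∈ latQ := by
  have h0 : (0 : Fin 8 → ℝ) ∈ latQ := ⟨0, by simp⟩
  have := latQ_sub_zsmul h0 hv 1
  simpa using this

lemma ip_int {v w : Fin 8 → ℝ} (hv : v ∈ latQ) (hw : w ∈ latQ) :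
    ∃ n : ℤ, ip v w = (n : ℝ) := by
  obtain ⟨c, rfl⟩ := hv; obtain ⟨d, rfl⟩ := hw
  refine ⟨∑ j, ∑ k, c j * d k * G j k, ?_⟩
  rw [ip_comb_comb]
  push_cast
  rfl

lemma sroot_mem_latQ (j : Fin 7) : sroot j ∈ latQ := by
  refine ⟨fun k => if k = j then 1 else 0, ?_⟩
  simp [ite_smul]

lemma sroot_mem_Phi (j : Fin 7) : sroot j ∈ Phi := by
  refine ⟨sroot_mem_latQ j, ?_⟩
  rw [gram]
  fin_cases j <;> norm_num [G]

lemma Phi_neg {v : Fin 8 → ℝ} (hv : v ∈ Phi) : -v ∈ Phi := by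
  refine ⟨latQ_neg hv.1, ?_⟩
  rw [ip_neg_left, ← ip_comm, ip_neg_left, ip_comm, hv.2]
  ring

lemma Phi_add {v w : Fin 8 → ℝ} (hv : v ∈ Phi) (hw : w ∈ Phi) (h : ip v w = -1) :
    v + w ∈ Phi := by
  refine ⟨latQ_add hv.1 hw.1, ?_⟩
  rw [ip_add_left, ip_add_right, ip_add_right, hv.2, hw.2, h, ip_comm w v, h]
  ring

lemma sroot_zeta (j : Fin 7) : ip (sroot j) zeta = if j = 6 then 1 else 0 := by
  fin_cases j <;>
    first
      | (rw [if_pos (by decide)]; norm_num [ip, sroot, zeta, Fin.sum_univ_succ])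
      | (rw [if_neg (by decide)]; norm_num [ip, sroot, zeta, Fin.sum_univ_succ])

lemma ip_nonneg (v : Fin 8 → ℝ) : 0 ≤ ip v v :=
  Finset.sum_nonneg fun i _ => mul_self_nonneg _

lemma ip_eq_zero {v : Fin 8 → ℝ} (h : ip v v = 0) : v = 0 := by
  funext i
  have h2 : ∀ j ∈ Finset.univ, (0:ℝ) ≤ v j * v j := fun j _ => mul_self_nonneg _
  have := (Finset.sum_eq_zero_iff_of_nonneg h2).1 h i (Finset.mem_univ i)
  exact mul_self_eq_zero.1 this

/-- The ζ-value of any root is an integer of absolute value at most 1. -/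
lemma zeta_val {β : Fin 8 → ℝ} (hβ : β ∈ Phi) :
    ∃ n : ℤ, ip β zeta = (n : ℝ) ∧ -1 ≤ n ∧ n ≤ 1 := by
  obtain ⟨c, hc⟩ := hβ.1
  have h1 : ip β zeta = (c 6 : ℝ) := by
    rw [hc, ip_comb_left]
    simp [sroot_zeta, Fin.sum_univ_seven]
  have h2 : ip β β = 2 := hβ.2
  have h3 : (β 0)*(β 0) + (β 1)*(β 1) + (β 2)*(β 2) + (β 3)*(β 3) + (β 4)*(β 4)
      + (β 5)*(β 5) + (β 6)*(β 6) + (β 7)*(β 7) = 2 := by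
    rw [← h2]; simp [ip, Fin.sum_univ_eight]
  have h4 : ip β zeta = β 5 - β 6 / 2 + β 7 / 2 := by
    simp only [ip]
    rw [Fin.sum_univ_eight]
    norm_num [show zeta 0 = 0 from rfl, show zeta 1 = 0 from rfl, show zeta 2 = 0 from rfl,
      show zeta 3 = 0 from rfl, show zeta 4 = 0 from rfl, show zeta 5 = 1 from rfl,
      show zeta 6 = -1/2 from rfl, show zeta 7 = 1/2 from rfl]
    ring
  have h5 : (ip β zeta)^2 ≤ 3 := by
    rw [h4]
    nlinarith [sq_nonneg (β 5 + β 6 - β 7), sq_nonneg (β 6 + β 7),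
      mul_self_nonneg (β 0), mul_self_nonneg (β 1), mul_self_nonneg (β 2),
      mul_self_nonneg (β 3), mul_self_nonneg (β 4)]
  have hb : ((c 6 : ℝ))^2 ≤ 3 := by rw [← h1]; exact h5
  have hbz : (c 6)^2 ≤ 3 := by exact_mod_cast hb
  refine ⟨c 6, h1, by nlinarith [hbz], by nlinarith [hbz]⟩

lemma Gv00 : G 0 0 = 2 := rfl
lemma Gv01 : G 0 1 = 0 := rfl
lemma Gv02 : G 0 2 = -1 := rfl
lemma Gv03 : G 0 3 = 0 := rfl
lemma Gv04 : G 0 4 = 0 := rfl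
lemma Gv05 : G 0 5 = 0 := rfl
lemma Gv06 : G 0 6 = 0 := rfl
lemma Gv10 : G 1 0 = 0 := rfl
lemma Gv11 : G 1 1 = 2 := rfl
lemma Gv12 : G 1 2 = 0 := rfl
lemma Gv13 : G 1 3 = -1 := rfl
lemma Gv14 : G 1 4 = 0 := rfl
lemma Gv15 : G 1 5 = 0 := rfl
lemma Gv16 : G 1 6 = 0 := rfl
lemma Gv20 : G 2 0 = -1 := rfl
lemma Gv21 : G 2 1 = 0 := rfl
lemma Gv22 : G 2 2 = 2 := rfl
lemma Gv23 : G 2 3 = -1 := rfl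
lemma Gv24 : G 2 4 = 0 := rfl
lemma Gv25 : G 2 5 = 0 := rfl
lemma Gv26 : G 2 6 = 0 := rfl
lemma Gv30 : G 3 0 = 0 := rfl
lemma Gv31 : G 3 1 = -1 := rfl
lemma Gv32 : G 3 2 = -1 := rfl
lemma Gv33 : G 3 3 = 2 := rfl
lemma Gv34 : G 3 4 = -1 := rfl
lemma Gv35 : G 3 5 = 0 := rfl
lemma Gv36 : G 3 6 = 0 := rfl
lemma Gv40 : G 4 0 = 0 := rfl
lemma Gv41 : G 4 1 = 0 := rfl
lemma Gv42 : G 4 2 = 0 := rfl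
lemma Gv43 : G 4 3 = -1 := rfl
lemma Gv44 : G 4 4 = 2 := rfl
lemma Gv45 : G 4 5 = -1 := rfl
lemma Gv46 : G 4 6 = 0 := rfl
lemma Gv50 : G 5 0 = 0 := rfl
lemma Gv51 : G 5 1 = 0 := rfl
lemma Gv52 : G 5 2 = 0 := rfl
lemma Gv53 : G 5 3 = 0 := rfl
lemma Gv54 : G 5 4 = -1 := rfl
lemma Gv55 : G 5 5 = 2 := rfl
lemma Gv56 : G 5 6 = -1 := rfl
lemma Gv60 : G 6 0 = 0 := rfl
lemma Gv61 : G 6 1 = 0 := rfl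
lemma Gv62 : G 6 2 = 0 := rfl
lemma Gv63 : G 6 3 = 0 := rfl
lemma Gv64 : G 6 4 = 0 := rfl
lemma Gv65 : G 6 5 = -1 := rfl
lemma Gv66 : G 6 6 = 2 := rfl

lemma bform (r t : Fin 7 → ℝ) :
    ip (∑ j, r j • sroot j) (∑ j, t j • sroot j)
      = 2*(r 0*t 0 + r 1*t 1 + r 2*t 2 + r 3*t 3 + r 4*t 4 + r 5*t 5 + r 6*t 6)
        - (r 0*t 2 + r 2*t 0) - (r 1*t 3 + r 3*t 1) - (r 2*t 3 + r 3*t 2)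
        - (r 3*t 4 + r 4*t 3) - (r 4*t 5 + r 5*t 4) - (r 5*t 6 + r 6*t 5) := by
  rw [ip_comb_comb]
  simp only [Fin.sum_univ_seven, Gv00, Gv01, Gv02, Gv03, Gv04, Gv05, Gv06, Gv10, Gv11, Gv12, Gv13, Gv14, Gv15, Gv16, Gv20, Gv21, Gv22, Gv23, Gv24, Gv25, Gv26, Gv30, Gv31, Gv32, Gv33, Gv34, Gv35, Gv36, Gv40, Gv41, Gv42, Gv43, Gv44, Gv45, Gv46, Gv50, Gv51, Gv52, Gv53, Gv54, Gv55, Gv56, Gv60, Gv61, Gv62, Gv63, Gv64, Gv65, Gv66]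
  push_cast
  ring

lemma coeff_recover (fw : Fin 7 → Fin 8 → ℝ)
    (hfw_pair : ∀ i j, ip (fw i) (sroot j) = if i = j then 1 else 0)
    (r : Fin 7 → ℝ) (i : Fin 7) : ip (fw i) (∑ j, r j • sroot j) = r i := by
  rw [ip_comb_right]
  simp [hfw_pair, mul_ite, Finset.sum_ite_eq]

lemma norm_ge_two (fw : Fin 7 → Fin 8 → ℝ)
    (hfw_pair : ∀ i j, ip (fw i) (sroot j) = if i = j then 1 else 0)
    (cI : Fin 7 → ℤ) (hne : cI ≠ 0) :
    2 ≤ ip (∑ j, (cI j : ℝ) • sroot j) (∑ j, (cI j : ℝ) • sroot j) := by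
  set X := ∑ j, (cI j : ℝ) • sroot j with hX
  have hXne : X ≠ 0 := by
    intro h
    apply hne
    funext i
    have h2 := coeff_recover fw hfw_pair (fun j => (cI j : ℝ)) i
    rw [← hX, h] at h2
    have : ip (fw i) 0 = 0 := by simp [ip]
    rw [this] at h2
    exact_mod_cast h2.symm
  have hpos : 0 < ip X X := by
    rcases (ip_nonneg X).lt_or_eq with h | h
    · exact h
    · exact absurd (ip_eq_zero h.symm) hXne
  set m : ℤ := cI 0^2 + cI 1^2 + cI 2^2 + cI 3^2 + cI 4^2 + cI 5^2 + cI 6^2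
      - cI 0*cI 2 - cI 1*cI 3 - cI 2*cI 3 - cI 3*cI 4 - cI 4*cI 5 - cI 5*cI 6 with hm
  have hval : ip X X = 2*(m : ℝ) := by
    rw [hX, bform, hm]
    push_cast
    ring
  have hmpos : 0 < m := by
    by_contra h
    push_neg at h
    have : (m:ℝ) ≤ 0 := by exact_mod_cast h
    linarith [hval, hpos]
  have : (1:ℝ) ≤ (m:ℝ) := by exact_mod_cast hmpos
  linarith [hval]

/-- A compact root cannot be orthogonal to a strictly `Δ⁺(k)`-dominant vector. -/
lemma dominant_not_orth (fw : Fin 7 → Fin 8 → ℝ)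
    (hfw_pair : ∀ i j, ip (fw i) (sroot j) = if i = j then 1 else 0)
    {μ δ : Fin 8 → ℝ} (hδ : δ ∈ Phi) (hz : ip δ zeta = 0)
    (hpos : ∀ i : Fin 6, 0 < ip μ (sroot i.castSucc)) : ip μ δ ≠ 0 := by
  obtain ⟨c, hc⟩ := hδ.1
  have h1 : ip δ zeta = (c 6 : ℝ) := by
    rw [hc, ip_comb_left]
    simp [sroot_zeta, Fin.sum_univ_seven]
  have hc6 : c 6 = 0 := by exact_mod_cast h1.symm.trans hz
  have hposall : ∀ j : Fin 7, j ≠ 6 → 0 < ip μ (sroot j) := by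
    intro j hj
    have hlt : (j : ℕ) < 6 := by
      rcases lt_or_ge (j : ℕ) 6 with h | h
      · exact h
      · exact absurd (Fin.ext (by omega : (j:ℕ) = ((6 : Fin 7):ℕ))) hj
    have := hpos ⟨(j : ℕ), hlt⟩
    have heq : (⟨(j : ℕ), hlt⟩ : Fin 6).castSucc = j := by
      apply Fin.ext
      simp [Fin.castSucc]
    rwa [heq] at this
  have hcne : c ≠ 0 := by
    rintro rfl
    have h2 := hδ.2
    rw [hc] at h2
    simp [ip] at h2
  obtain ⟨j0, hj0⟩ : ∃ j, c j ≠ 0 := by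
    by_contra h
    push_neg at h
    exact hcne (funext h)
  have hj06 : j0 ≠ 6 := by rintro rfl; exact hj0 hc6
  have hexp : ip μ δ = ∑ j, (c j : ℝ) * ip μ (sroot j) := by rw [hc, ip_comb_right]
  have hsign : (∀ j, 0 ≤ c j) ∨ (∀ j, c j ≤ 0) := by
    by_contra hns
    push_neg at hns
    obtain ⟨⟨jn, hjn⟩, ⟨jp, hjp⟩⟩ := hns
    set p : Fin 7 → ℤ := fun j => max (c j) 0 with hpdef
    set n : Fin 7 → ℤ := fun j => max (-c j) 0 with hndef
    have hp : ∀ j, 0 ≤ p j := fun j => le_max_right _ _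
    have hn : ∀ j, 0 ≤ n j := fun j => le_max_right _ _
    have hpn0 : ∀ j, p j * n j = 0 := by
      intro j
      rcases le_total (c j) 0 with h | h
      · have : p j = 0 := max_eq_right h
        rw [this, zero_mul]
      · have : n j = 0 := max_eq_right (by omega)
        rw [this, mul_zero]
    have hcpn : ∀ j, c j = p j - n j := by
      intro j
      rcases le_total (c j) 0 with h | h
      · have e1 : p j = 0 := max_eq_right h
        have e2 : n j = -c j := max_eq_left (by omega)
        omega
      · have e1 : p j = c j := max_eq_left h
        have e2 : n j = 0 := max_eq_right (by omega)
        omega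
    set P := ∑ j, (p j : ℝ) • sroot j with hP
    set N := ∑ j, (n j : ℝ) • sroot j with hN
    have hPNle : ip P N ≤ 0 := by
      rw [hP, hN, bform]
      have d0 : ((p 0:ℝ)) * (n 0:ℝ) = 0 := by exact_mod_cast hpn0 0
      have d1 : ((p 1:ℝ)) * (n 1:ℝ) = 0 := by exact_mod_cast hpn0 1
      have d2 : ((p 2:ℝ)) * (n 2:ℝ) = 0 := by exact_mod_cast hpn0 2
      have d3 : ((p 3:ℝ)) * (n 3:ℝ) = 0 := by exact_mod_cast hpn0 3
      have d4 : ((p 4:ℝ)) * (n 4:ℝ) = 0 := by exact_mod_cast hpn0 4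
      have d5 : ((p 5:ℝ)) * (n 5:ℝ) = 0 := by exact_mod_cast hpn0 5
      have d6 : ((p 6:ℝ)) * (n 6:ℝ) = 0 := by exact_mod_cast hpn0 6
      have pr : ∀ j, (0:ℝ) ≤ (p j : ℝ) := fun j => by exact_mod_cast hp j
      have nr : ∀ j, (0:ℝ) ≤ (n j : ℝ) := fun j => by exact_mod_cast hn j
      have m1 := mul_nonneg (pr 0) (nr 2); have m2 := mul_nonneg (pr 2) (nr 0)
      have m3 := mul_nonneg (pr 1) (nr 3); have m4 := mul_nonneg (pr 3) (nr 1)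
      have m5 := mul_nonneg (pr 2) (nr 3); have m6 := mul_nonneg (pr 3) (nr 2)
      have m7 := mul_nonneg (pr 3) (nr 4); have m8 := mul_nonneg (pr 4) (nr 3)
      have m9 := mul_nonneg (pr 4) (nr 5); have m10 := mul_nonneg (pr 5) (nr 4)
      have m11 := mul_nonneg (pr 5) (nr 6); have m12 := mul_nonneg (pr 6) (nr 5)
      linarith
    have hpne : p ≠ 0 := by
      intro h
      have := congrFun h jp
      simp only [hpdef, Pi.zero_apply] at this
      omega
    have hnne : n ≠ 0 := by
      intro h
      have := congrFun h jn
      simp only [hndef, Pi.zero_apply] at this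
      omega
    have hPge := norm_ge_two fw hfw_pair p hpne
    have hNge := norm_ge_two fw hfw_pair n hnne
    rw [← hP] at hPge
    rw [← hN] at hNge
    have hδeq : δ = P - N := by
      rw [hc, hP, hN, ← Finset.sum_sub_distrib]
      refine Finset.sum_congr rfl fun j _ => ?_
      rw [← sub_smul]
      congr 1
      have := hcpn j
      push_cast [this]
      ring
    have h2 := hδ.2
    rw [hδeq] at h2
    have h3 : ip (P - N) (P - N) = ip P P - 2 * ip P N + ip N N := by
      rw [ip_sub_left, ip_sub_right, ip_sub_right, ip_comm N P]
      ring
    linarith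
  rcases hsign with hsgn | hsgn
  · have : 0 < ip μ δ := by
      rw [hexp]
      apply Finset.sum_pos'
      · intro j _
        rcases eq_or_ne j 6 with rfl | hj
        · rw [hc6]; simp
        · exact mul_nonneg (by exact_mod_cast hsgn j) (le_of_lt (hposall j hj))
      · refine ⟨j0, Finset.mem_univ _, ?_⟩
        have hcast : (0:ℝ) < (c j0 : ℝ) := by
          exact_mod_cast lt_of_le_of_ne (hsgn j0) (Ne.symm hj0)
        exact mul_pos hcast (hposall j0 hj06)
    exact this.ne'
  · have : 0 < ∑ j, (-(c j) : ℝ) * ip μ (sroot j) := by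
      apply Finset.sum_pos'
      · intro j _
        rcases eq_or_ne j 6 with rfl | hj
        · rw [hc6]; simp
        · refine mul_nonneg ?_ (le_of_lt (hposall j hj))
          have : c j ≤ 0 := hsgn j
          have : (c j : ℝ) ≤ 0 := by exact_mod_cast this
          linarith
      · refine ⟨j0, Finset.mem_univ _, ?_⟩
        have hcast : (0:ℝ) < (-(c j0) : ℝ) := by
          have : c j0 < 0 := lt_of_le_of_ne (hsgn j0) hj0
          have : (c j0:ℝ) < 0 := by exact_mod_cast this
          linarith
        exact mul_pos hcast (hposall j0 hj06)
    have heq : ∑ j, (-(c j) : ℝ) * ip μ (sroot j) = - ∑ j, (c j : ℝ) * ip μ (sroot j) := by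
      rw [← Finset.sum_neg_distrib]
      refine Finset.sum_congr rfl fun j _ => ?_
      ring
    rw [heq] at this
    rw [hexp]
    intro h
    rw [h] at this
    simp at this


/-- From two roots at angle 120° orthogonal to μ, find a compact root orthogonal to μ. -/
lemma find_compact_pair {μ β1 β2 : Fin 8 → ℝ} (h1 : β1 ∈ Phi) (h2 : β2 ∈ Phi)
    (h12 : ip β1 β2 = -1) (o1 : ip μ β1 = 0) (o2 : ip μ β2 = 0) :
    ∃ δ ∈ Phi, ip δ zeta = 0 ∧ ip μ δ = 0 := by
  obtain ⟨s1, hs1, hs1b⟩ := zeta_val h1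
  obtain ⟨s2, hs2, hs2b⟩ := zeta_val h2
  have h12Φ : β1 + β2 ∈ Phi := Phi_add h1 h2 h12
  obtain ⟨s12, hs12, hs12b⟩ := zeta_val h12Φ
  have hsum : s12 = s1 + s2 := by
    have : ip (β1 + β2) zeta = ip β1 zeta + ip β2 zeta := ip_add_left _ _ _
    rw [hs12, hs1, hs2] at this
    exact_mod_cast this
  rcases eq_or_ne s1 0 with hz1 | hz1
  · exact ⟨β1, h1, by rw [hs1, hz1]; simp, o1⟩
  rcases eq_or_ne s2 0 with hz2 | hz2
  · exact ⟨β2, h2, by rw [hs2, hz2]; simp, o2⟩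
  have hz12 : s12 = 0 := by omega
  exact ⟨β1 + β2, h12Φ, by rw [hs12, hz12]; simp,
    by rw [ip_add_right, o1, o2]; ring⟩

/-- From three mutually orthogonal roots orthogonal to μ together with a root pairing
-1 with each of them, one of the three is compact. -/
lemma find_compact_quad {μ β1 β2 β3 δ : Fin 8 → ℝ}
    (h1 : β1 ∈ Phi) (h2 : β2 ∈ Phi) (h3 : β3 ∈ Phi) (hδ : δ ∈ Phi)
    (h12 : ip β1 β2 = 0) (h13 : ip β1 β3 = 0) (h23 : ip β2 β3 = 0)
    (hd1 : ip δ β1 = -1) (hd2 : ip δ β2 = -1) (hd3 : ip δ β3 = -1)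
    (o1 : ip μ β1 = 0) (o2 : ip μ β2 = 0) (o3 : ip μ β3 = 0) :
    ∃ δ' ∈ Phi, ip δ' zeta = 0 ∧ ip μ δ' = 0 := by
  obtain ⟨s1, hs1, hs1b⟩ := zeta_val h1
  obtain ⟨s2, hs2, hs2b⟩ := zeta_val h2
  obtain ⟨s3, hs3, hs3b⟩ := zeta_val h3
  obtain ⟨t, ht, htb⟩ := zeta_val hδ
  rcases eq_or_ne s1 0 with hz | hz
  · exact ⟨β1, h1, by rw [hs1, hz]; simp, o1⟩
  rcases eq_or_ne s2 0 with hz2 | hz2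
  · exact ⟨β2, h2, by rw [hs2, hz2]; simp, o2⟩
  rcases eq_or_ne s3 0 with hz3 | hz3
  · exact ⟨β3, h3, by rw [hs3, hz3]; simp, o3⟩
  exfalso
  -- build the roots δ+βi, δ+βi+βj, δ+β1+β2+β3 and get integer constraints
  have hA1 : δ + β1 ∈ Phi := Phi_add hδ h1 hd1
  have hA2 : δ + β2 ∈ Phi := Phi_add hδ h2 hd2
  have hA3 : δ + β3 ∈ Phi := Phi_add hδ h3 hd3
  have hA12 : δ + β1 + β2 ∈ Phi := by
    refine Phi_add hA1 h2 ?_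
    rw [ip_add_left, hd2, h12]; ring
  have hA13 : δ + β1 + β3 ∈ Phi := by
    refine Phi_add hA1 h3 ?_
    rw [ip_add_left, hd3, h13]; ring
  have hA23 : δ + β2 + β3 ∈ Phi := by
    refine Phi_add hA2 h3 ?_
    rw [ip_add_left, hd3, h23]; ring
  have hA123 : δ + β1 + β2 + β3 ∈ Phi := by
    refine Phi_add hA12 h3 ?_
    rw [ip_add_left, ip_add_left, hd3, h13, h23]; ring
  obtain ⟨u1, hu1, hu1b⟩ := zeta_val hA1
  obtain ⟨u2, hu2, hu2b⟩ := zeta_val hA2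
  obtain ⟨u3, hu3, hu3b⟩ := zeta_val hA3
  obtain ⟨u12, hu12, hu12b⟩ := zeta_val hA12
  obtain ⟨u13, hu13, hu13b⟩ := zeta_val hA13
  obtain ⟨u23, hu23, hu23b⟩ := zeta_val hA23
  obtain ⟨u123, hu123, hu123b⟩ := zeta_val hA123
  have e1 : u1 = t + s1 := by
    have : ip (δ + β1) zeta = ip δ zeta + ip β1 zeta := ip_add_left _ _ _
    rw [hu1, ht, hs1] at this; exact_mod_cast this
  have e2 : u2 = t + s2 := by
    have : ip (δ + β2) zeta = ip δ zeta + ip β2 zeta := ip_add_left _ _ _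
    rw [hu2, ht, hs2] at this; exact_mod_cast this
  have e3 : u3 = t + s3 := by
    have : ip (δ + β3) zeta = ip δ zeta + ip β3 zeta := ip_add_left _ _ _
    rw [hu3, ht, hs3] at this; exact_mod_cast this
  have e12 : u12 = t + s1 + s2 := by
    have : ip (δ + β1 + β2) zeta = ip δ zeta + ip β1 zeta + ip β2 zeta := by
      rw [ip_add_left, ip_add_left]
    rw [hu12, ht, hs1, hs2] at this; exact_mod_cast this
  have e13 : u13 = t + s1 + s3 := by
    have : ip (δ + β1 + β3) zeta = ip δ zeta + ip β1 zeta + ip β3 zeta := by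
      rw [ip_add_left, ip_add_left]
    rw [hu13, ht, hs1, hs3] at this; exact_mod_cast this
  have e23 : u23 = t + s2 + s3 := by
    have : ip (δ + β2 + β3) zeta = ip δ zeta + ip β2 zeta + ip β3 zeta := by
      rw [ip_add_left, ip_add_left]
    rw [hu23, ht, hs2, hs3] at this; exact_mod_cast this
  have e123 : u123 = t + s1 + s2 + s3 := by
    have : ip (δ + β1 + β2 + β3) zeta
        = ip δ zeta + ip β1 zeta + ip β2 zeta + ip β3 zeta := by
      rw [ip_add_left, ip_add_left, ip_add_left]
    rw [hu123, ht, hs1, hs2, hs3] at this; exact_mod_cast this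
  omega

/-- Every element of the Weyl group preserves the inner product and the root system. -/
lemma W_pres {w : (Fin 8 → ℝ) ≃ₗ[ℝ] (Fin 8 → ℝ)} (hw : w ∈ W) :
    (∀ u v, ip (w u) (w v) = ip u v) ∧ (∀ v ∈ Phi, w v ∈ Phi) ∧ (∀ v ∈ Phi, w⁻¹ v ∈ Phi) := by
  induction hw using Subgroup.closure_induction with
  | mem g hg =>
    obtain ⟨α, hα, hgdef⟩ := hg
    have hα2 : ip α α = 2 := hα.2
    have hipp : ∀ u v, ip (g u) (g v) = ip u v := by
      intro u v
      rw [hgdef u, hgdef v]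
      simp only [ip_sub_left, ip_sub_right, ip_smul_left, ip_smul_right]
      rw [ip_comm α v, hα2]
      ring
    have hΦ : ∀ v ∈ Phi, g v ∈ Phi := by
      intro v hv
      obtain ⟨nn, hnn⟩ := ip_int hv.1 hα.1
      constructor
      · rw [hgdef v, hnn]
        exact latQ_sub_zsmul hv.1 hα.1 nn
      · rw [hipp v v]; exact hv.2
    have hinv : ∀ v, g (g v) = v := by
      intro v
      rw [hgdef (g v), hgdef v]
      have : ip (v - ip v α • α) α = - ip v α := by
        rw [ip_sub_left, ip_smul_left, hα2]; ring
      rw [this]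
      simp only [neg_smul, sub_neg_eq_add]
      abel
    have hginv : ∀ v, g⁻¹ v = g v := by
      intro v
      have h1 : g (g v) = v := hinv v
      calc (g⁻¹ : (Fin 8 → ℝ) ≃ₗ[ℝ] (Fin 8 → ℝ)) v = g.symm v := rfl
        _ = g.symm (g (g v)) := by rw [h1]
        _ = g v := g.symm_apply_apply _
    exact ⟨hipp, hΦ, fun v hv => by rw [hginv v]; exact hΦ v hv⟩
  | one => exact ⟨fun u v => rfl, fun v hv => hv, fun v hv => by rw [inv_one]; exact hv⟩
  | mul x y hx hy ihx ihy =>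
    obtain ⟨ix, φx, φxi⟩ := ihx
    obtain ⟨iy, φy, φyi⟩ := ihy
    refine ⟨fun u v => ?_, fun v hv => ?_, fun v hv => ?_⟩
    · have : ∀ u, (x * y) u = x (y u) := fun u => rfl
      rw [this u, this v, ix, iy]
    · have : (x * y) v = x (y v) := rfl
      rw [this]; exact φx _ (φy _ hv)
    · have : (x * y)⁻¹ v = y⁻¹ (x⁻¹ v) := by rw [mul_inv_rev]; rfl
      rw [this]; exact φyi _ (φxi _ hv)
  | inv x hx ihx =>
    obtain ⟨ix, φx, φxi⟩ := ihx
    refine ⟨fun u v => ?_, fun v hv => φxi v hv, fun v hv => by rw [inv_inv]; exact φx v hv⟩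
    have h1 : ∀ u, x (x⁻¹ u) = u := fun u => by
      have : (x * x⁻¹) u = u := by rw [mul_inv_cancel]; rfl
      exact this
    have := ix (x⁻¹ u) (x⁻¹ v)
    rw [h1 u, h1 v] at this
    exact this.symm


/-- if one of the sixteen listed sums of the (nonnegative) coordinates of
Λ = aζ₁+⋯+gζ₇ vanishes, then no element of the orbit W·Λ is strictly Δ⁺(k)-dominant. -/
theorem e7_no_strictly_dominant_orbit_element
    (fw : Fin 7 → Fin 8 → ℝ)
    (hfw_span : ∀ i, fw i ∈ Submodule.span ℝ (Set.range sroot))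
    (hfw_pair : ∀ i j, ip (fw i) (sroot j) = if i = j then 1 else 0)
    (a b c d e f g : ℝ)
    (ha : 0 ≤ a) (hb : 0 ≤ b) (hc : 0 ≤ c) (hd : 0 ≤ d)
    (he : 0 ≤ e) (hf : 0 ≤ f) (hg : 0 ≤ g)
    (h0 : a + c = 0 ∨ b + d = 0 ∨ c + d = 0 ∨ d + e = 0 ∨ e + f = 0 ∨ f + g = 0 ∨
          a + b + e = 0 ∨ a + b + f = 0 ∨ a + b + g = 0 ∨ a + d + f = 0 ∨
          a + d + g = 0 ∨ a + e + g = 0 ∨ b + c + e = 0 ∨ b + c + f = 0 ∨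
          b + c + g = 0 ∨ c + e + g = 0) :
    ∀ w ∈ W, ∃ i : Fin 6,
      ip (w (a • fw 0 + b • fw 1 + c • fw 2 + d • fw 3 + e • fw 4 + f • fw 5 + g • fw 6))
          (sroot i.castSucc) ≤ 0 := by
  intro w hw
  obtain ⟨hipW, hPhiW, -⟩ := W_pres hw
  set Λ := a • fw 0 + b • fw 1 + c • fw 2 + d • fw 3 + e • fw 4 + f • fw 5 + g • fw 6
    with hLdef
  by_contra hcon
  push_neg at hcon
  have key : ∃ δ ∈ Phi, ip δ zeta = 0 ∧ ip (w Λ) δ = 0 := by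
    have PAIR : ∀ β1 β2 : Fin 8 → ℝ, β1 ∈ Phi → β2 ∈ Phi → ip β1 β2 = -1 →
        ip Λ β1 = 0 → ip Λ β2 = 0 → ∃ δ ∈ Phi, ip δ zeta = 0 ∧ ip (w Λ) δ = 0 := by
      intro β1 β2 hb1 hb2 h12 o1 o2
      refine find_compact_pair (μ := w Λ) (hPhiW _ hb1) (hPhiW _ hb2) ?_ ?_ ?_
      · rw [hipW]; exact h12
      · rw [hipW]; exact o1
      · rw [hipW]; exact o2
    have QUAD : ∀ β1 β2 β3 δ : Fin 8 → ℝ, β1 ∈ Phi → β2 ∈ Phi → β3 ∈ Phi → δ ∈ Phi →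
        ip β1 β2 = 0 → ip β1 β3 = 0 → ip β2 β3 = 0 →
        ip δ β1 = -1 → ip δ β2 = -1 → ip δ β3 = -1 →
        ip Λ β1 = 0 → ip Λ β2 = 0 → ip Λ β3 = 0 →
        ∃ δ' ∈ Phi, ip δ' zeta = 0 ∧ ip (w Λ) δ' = 0 := by
      intro β1 β2 β3 δ hb1 hb2 hb3 hdm h12 h13 h23 hd1 hd2 hd3 o1 o2 o3
      refine find_compact_quad (μ := w Λ) (hPhiW _ hb1) (hPhiW _ hb2) (hPhiW _ hb3)
        (hPhiW _ hdm) ?_ ?_ ?_ ?_ ?_ ?_ ?_ ?_ ?_ <;> rw [hipW] <;> assumption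
    have hco0 : ip Λ (sroot 0) = a := by
      rw [hLdef]
      simp [ip_add_left, ip_smul_left, hfw_pair]

    have hco1 : ip Λ (sroot 1) = b := by
      rw [hLdef]
      simp [ip_add_left, ip_smul_left, hfw_pair]

    have hco2 : ip Λ (sroot 2) = c := by
      rw [hLdef]
      simp [ip_add_left, ip_smul_left, hfw_pair]

    have hco3 : ip Λ (sroot 3) = d := by
      rw [hLdef]
      simp [ip_add_left, ip_smul_left, hfw_pair]

    have hco4 : ip Λ (sroot 4) = e := by
      rw [hLdef]
      simp [ip_add_left, ip_smul_left, hfw_pair]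

    have hco5 : ip Λ (sroot 5) = f := by
      rw [hLdef]
      simp [ip_add_left, ip_smul_left, hfw_pair]

    have hco6 : ip Λ (sroot 6) = g := by
      rw [hLdef]
      simp [ip_add_left, ip_smul_left, hfw_pair]
    rcases h0 with h|h|h|h|h|h|h|h|h|h|h|h|h|h|h|h
    · have z1 : a = 0 := by linarith [ha, hc]
      have z2 : c = 0 := by linarith [ha, hc]
      exact PAIR (sroot 0) (sroot 2) (sroot_mem_Phi 0) (sroot_mem_Phi 2)
        (by rw [gram, Gv02]; norm_num)
        (by rw [hco0, z1]) (by rw [hco2, z2])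
    · have z1 : b = 0 := by linarith [hb, hd]
      have z2 : d = 0 := by linarith [hb, hd]
      exact PAIR (sroot 1) (sroot 3) (sroot_mem_Phi 1) (sroot_mem_Phi 3)
        (by rw [gram, Gv13]; norm_num)
        (by rw [hco1, z1]) (by rw [hco3, z2])
    · have z1 : c = 0 := by linarith [hc, hd]
      have z2 : d = 0 := by linarith [hc, hd]
      exact PAIR (sroot 2) (sroot 3) (sroot_mem_Phi 2) (sroot_mem_Phi 3)
        (by rw [gram, Gv23]; norm_num)
        (by rw [hco2, z1]) (by rw [hco3, z2])
    · have z1 : d = 0 := by linarith [hd, he]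
      have z2 : e = 0 := by linarith [hd, he]
      exact PAIR (sroot 3) (sroot 4) (sroot_mem_Phi 3) (sroot_mem_Phi 4)
        (by rw [gram, Gv34]; norm_num)
        (by rw [hco3, z1]) (by rw [hco4, z2])
    · have z1 : e = 0 := by linarith [he, hf]
      have z2 : f = 0 := by linarith [he, hf]
      exact PAIR (sroot 4) (sroot 5) (sroot_mem_Phi 4) (sroot_mem_Phi 5)
        (by rw [gram, Gv45]; norm_num)
        (by rw [hco4, z1]) (by rw [hco5, z2])
    · have z1 : f = 0 := by linarith [hf, hg]
      have z2 : g = 0 := by linarith [hf, hg]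
      exact PAIR (sroot 5) (sroot 6) (sroot_mem_Phi 5) (sroot_mem_Phi 6)
        (by rw [gram, Gv56]; norm_num)
        (by rw [hco5, z1]) (by rw [hco6, z2])
    · have z1 : a = 0 := by linarith [ha, hb, he]
      have z2 : b = 0 := by linarith [ha, hb, he]
      have z3 : e = 0 := by linarith [ha, hb, he]
      set dlt := ∑ t, ((![0, 0, 1, 1, 0, 0, 0] : Fin 7 → ℤ) t : ℝ) • sroot t with hdlt
      have hdm : dlt ∈ Phi := by
        refine ⟨⟨![0, 0, 1, 1, 0, 0, 0], rfl⟩, ?_⟩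
        rw [hdlt, bform]
        norm_num [Fin.sum_univ_seven, show (![0, 0, 1, 1, 0, 0, 0] : Fin 7 → ℤ) 0 = 0 from rfl, show (![0, 0, 1, 1, 0, 0, 0] : Fin 7 → ℤ) 1 = 0 from rfl, show (![0, 0, 1, 1, 0, 0, 0] : Fin 7 → ℤ) 2 = 1 from rfl, show (![0, 0, 1, 1, 0, 0, 0] : Fin 7 → ℤ) 3 = 1 from rfl, show (![0, 0, 1, 1, 0, 0, 0] : Fin 7 → ℤ) 4 = 0 from rfl, show (![0, 0, 1, 1, 0, 0, 0] : Fin 7 → ℤ) 5 = 0 from rfl, show (![0, 0, 1, 1, 0, 0, 0] : Fin 7 → ℤ) 6 = 0 from rfl, Gv00, Gv01, Gv02, Gv03, Gv04, Gv05, Gv06, Gv10, Gv11, Gv12, Gv13, Gv14, Gv15, Gv16, Gv20, Gv21, Gv22, Gv23, Gv24, Gv25, Gv26, Gv30, Gv31, Gv32, Gv33, Gv34, Gv35, Gv36, Gv40, Gv41, Gv42, Gv43, Gv44, Gv45, Gv46, Gv50, Gv51, Gv52, Gv53, Gv54, Gv55, Gv56, Gv60, Gv61, Gv62, Gv63, Gv64,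 Gv65, Gv66]
      have hpr : ∀ k : Fin 7, ip dlt (sroot k) = ((![0, 0, 1, 1, 0, 0, 0] : Fin 7 → ℤ) 0 : ℝ) * (G 0 k : ℝ)
          + ((![0, 0, 1, 1, 0, 0, 0] : Fin 7 → ℤ) 1 : ℝ) * (G 1 k : ℝ) + ((![0, 0, 1, 1, 0, 0, 0] : Fin 7 → ℤ) 2 : ℝ) * (G 2 k : ℝ)
          + ((![0, 0, 1, 1, 0, 0, 0] : Fin 7 → ℤ) 3 : ℝ) * (G 3 k : ℝ) + ((![0, 0, 1, 1, 0, 0, 0] : Fin 7 → ℤ) 4 : ℝ) * (G 4 k : ℝ)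
          + ((![0, 0, 1, 1, 0, 0, 0] : Fin 7 → ℤ) 5 : ℝ) * (G 5 k : ℝ) + ((![0, 0, 1, 1, 0, 0, 0] : Fin 7 → ℤ) 6 : ℝ) * (G 6 k : ℝ) := by
        intro k
        rw [hdlt, ip_comb_left]
        simp only [Fin.sum_univ_seven, gram]
      exact QUAD (sroot 0) (sroot 1) (sroot 4) dlt (sroot_mem_Phi 0) (sroot_mem_Phi 1) (sroot_mem_Phi 4) hdm
        (by rw [gram, Gv01]; norm_num) (by rw [gram, Gv04]; norm_num) (by rw [gram, Gv14]; norm_num)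
        (by rw [hpr 0]; norm_num [Fin.sum_univ_seven, show (![0, 0, 1, 1, 0, 0, 0] : Fin 7 → ℤ) 0 = 0 from rfl, show (![0, 0, 1, 1, 0, 0, 0] : Fin 7 → ℤ) 1 = 0 from rfl, show (![0, 0, 1, 1, 0, 0, 0] : Fin 7 → ℤ) 2 = 1 from rfl, show (![0, 0, 1, 1, 0, 0, 0] : Fin 7 → ℤ) 3 = 1 from rfl, show (![0, 0, 1, 1, 0, 0, 0] : Fin 7 → ℤ) 4 = 0 from rfl, show (![0, 0, 1, 1, 0, 0, 0] : Fin 7 → ℤ) 5 = 0 from rfl, show (![0, 0, 1, 1, 0, 0, 0] : Fin 7 → ℤ) 6 = 0 from rfl, Gv00, Gv01, Gv02, Gv03, Gv04, Gv05, Gv06, Gv10, Gv11, Gv12, Gv13, Gv14, Gv15, Gv16, Gv20, Gv21, Gv22, Gv23, Gv24, Gv25, Gv26, Gv30, Gv31, Gv32, Gv33, Gv34, Gv35, Gv36, Gv40, Gv41, Gv42, Gv43, Gv44, Gv45, Gv46, Gv50, Gv51, Gv52, Gv53, Gv54, Gv55, Gv56, Gv60, Gv61, Gv62, Gv63, Gv64,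 Gv65, Gv66]) (by rw [hpr 1]; norm_num [Fin.sum_univ_seven, show (![0, 0, 1, 1, 0, 0, 0] : Fin 7 → ℤ) 0 = 0 from rfl, show (![0, 0, 1, 1, 0, 0, 0] : Fin 7 → ℤ) 1 = 0 from rfl, show (![0, 0, 1, 1, 0, 0, 0] : Fin 7 → ℤ) 2 = 1 from rfl, show (![0, 0, 1, 1, 0, 0, 0] : Fin 7 → ℤ) 3 = 1 from rfl, show (![0, 0, 1, 1, 0, 0, 0] : Fin 7 → ℤ) 4 = 0 from rfl, show (![0, 0, 1, 1, 0, 0, 0] : Fin 7 → ℤ) 5 = 0 from rfl, show (![0, 0, 1, 1, 0, 0, 0] : Fin 7 → ℤ) 6 = 0 from rfl, Gv00, Gv01, Gv02, Gv03, Gv04, Gv05, Gv06, Gv10, Gv11, Gv12, Gv13, Gv14, Gv15, Gv16, Gv20, Gv21, Gv22, Gv23, Gv24, Gv25, Gv26, Gv30, Gv31, Gv32, Gv33, Gv34, Gv35, Gv36, Gv40, Gv41, Gv42, Gv43, Gv44, Gv45, Gv46, Gv50, Gv51, Gv52, Gv53, Gv54, Gv55, Gv56, Gv60, Gv61, Gv62,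 Gv63, Gv64, Gv65, Gv66]) (by rw [hpr 4]; norm_num [Fin.sum_univ_seven, show (![0, 0, 1, 1, 0, 0, 0] : Fin 7 → ℤ) 0 = 0 from rfl, show (![0, 0, 1, 1, 0, 0, 0] : Fin 7 → ℤ) 1 = 0 from rfl, show (![0, 0, 1, 1, 0, 0, 0] : Fin 7 → ℤ) 2 = 1 from rfl, show (![0, 0, 1, 1, 0, 0, 0] : Fin 7 → ℤ) 3 = 1 from rfl, show (![0, 0, 1, 1, 0, 0, 0] : Fin 7 → ℤ) 4 = 0 from rfl, show (![0, 0, 1, 1, 0, 0, 0] : Fin 7 → ℤ) 5 = 0 from rfl, show (![0, 0, 1, 1, 0, 0, 0] : Fin 7 → ℤ) 6 = 0 from rfl, Gv00, Gv01, Gv02, Gv03, Gv04, Gv05, Gv06, Gv10, Gv11, Gv12, Gv13, Gv14, Gv15, Gv16, Gv20, Gv21, Gv22, Gv23, Gv24, Gv25, Gv26, Gv30, Gv31, Gv32, Gv33, Gv34, Gv35, Gv36, Gv40, Gv41, Gv42, Gv43, Gv44, Gv45, Gv46, Gv50, Gv51, Gv52, Gv53, Gv54, Gv55, Gv56, Gv60,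 Gv61, Gv62, Gv63, Gv64, Gv65, Gv66]) (by rw [hco0, z1]) (by rw [hco1, z2]) (by rw [hco4, z3])
    · have z1 : a = 0 := by linarith [ha, hb, hf]
      have z2 : b = 0 := by linarith [ha, hb, hf]
      have z3 : f = 0 := by linarith [ha, hb, hf]
      set dlt := ∑ t, ((![0, 0, 1, 1, 1, 0, 0] : Fin 7 → ℤ) t : ℝ) • sroot t with hdlt
      have hdm : dlt ∈ Phi := by
        refine ⟨⟨![0, 0, 1, 1, 1, 0, 0], rfl⟩, ?_⟩
        rw [hdlt, bform]
        norm_num [Fin.sum_univ_seven, show (![0, 0, 1, 1, 1, 0, 0] : Fin 7 → ℤ) 0 = 0 from rfl, show (![0, 0, 1, 1, 1, 0, 0] : Fin 7 → ℤ) 1 = 0 from rfl, show (![0, 0, 1, 1, 1, 0, 0] : Fin 7 → ℤ) 2 = 1 from rfl, show (![0, 0, 1, 1, 1, 0, 0] : Fin 7 → ℤ) 3 = 1 from rfl, show (![0, 0, 1, 1, 1, 0, 0] : Fin 7 → ℤ) 4 = 1 from rfl, show (![0, 0, 1, 1, 1, 0, 0] : Fin 7 → ℤ) 5 = 0 from rfl,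 show (![0, 0, 1, 1, 1, 0, 0] : Fin 7 → ℤ) 6 = 0 from rfl, Gv00, Gv01, Gv02, Gv03, Gv04, Gv05, Gv06, Gv10, Gv11, Gv12, Gv13, Gv14, Gv15, Gv16, Gv20, Gv21, Gv22, Gv23, Gv24, Gv25, Gv26, Gv30, Gv31, Gv32, Gv33, Gv34, Gv35, Gv36, Gv40, Gv41, Gv42, Gv43, Gv44, Gv45, Gv46, Gv50, Gv51, Gv52, Gv53, Gv54, Gv55, Gv56, Gv60, Gv61, Gv62, Gv63, Gv64, Gv65, Gv66]
      have hpr : ∀ k : Fin 7, ip dlt (sroot k) = ((![0, 0, 1, 1, 1, 0, 0] : Fin 7 → ℤ) 0 : ℝ) * (G 0 k : ℝ)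
          + ((![0, 0, 1, 1, 1, 0, 0] : Fin 7 → ℤ) 1 : ℝ) * (G 1 k : ℝ) + ((![0, 0, 1, 1, 1, 0, 0] : Fin 7 → ℤ) 2 : ℝ) * (G 2 k : ℝ)
          + ((![0, 0, 1, 1, 1, 0, 0] : Fin 7 → ℤ) 3 : ℝ) * (G 3 k : ℝ) + ((![0, 0, 1, 1, 1, 0, 0] : Fin 7 → ℤ) 4 : ℝ) * (G 4 k : ℝ)
          + ((![0, 0, 1, 1, 1, 0, 0] : Fin 7 → ℤ) 5 : ℝ) * (G 5 k : ℝ) + ((![0, 0, 1, 1, 1, 0, 0] : Fin 7 → ℤ) 6 : ℝ) * (G 6 k : ℝ) := by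
        intro k
        rw [hdlt, ip_comb_left]
        simp only [Fin.sum_univ_seven, gram]
      exact QUAD (sroot 0) (sroot 1) (sroot 5) dlt (sroot_mem_Phi 0) (sroot_mem_Phi 1) (sroot_mem_Phi 5) hdm
        (by rw [gram, Gv01]; norm_num) (by rw [gram, Gv05]; norm_num) (by rw [gram, Gv15]; norm_num)
        (by rw [hpr 0]; norm_num [Fin.sum_univ_seven, show (![0, 0, 1, 1, 1, 0, 0] : Fin 7 → ℤ) 0 = 0 from rfl, show (![0, 0, 1, 1, 1, 0, 0] : Fin 7 → ℤ) 1 = 0 from rfl, show (![0, 0, 1, 1, 1, 0, 0] : Fin 7 → ℤ) 2 = 1 from rfl, show (![0, 0, 1, 1, 1, 0, 0] : Fin 7 → ℤ) 3 = 1 from rfl, show (![0, 0, 1, 1, 1, 0, 0] : Fin 7 → ℤ) 4 = 1 from rfl, show (![0, 0, 1, 1, 1, 0, 0] : Fin 7 → ℤ) 5 = 0 from rfl, show (![0, 0, 1, 1, 1, 0, 0] : Fin 7 → ℤ) 6 = 0 from rfl, Gv00, Gv01, Gv02, Gv03, Gv04, Gv05, Gv06, Gv10, Gv11, Gv12, Gv13,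 Gv14, Gv15, Gv16, Gv20, Gv21, Gv22, Gv23, Gv24, Gv25, Gv26, Gv30, Gv31, Gv32, Gv33, Gv34, Gv35, Gv36, Gv40, Gv41, Gv42, Gv43, Gv44, Gv45, Gv46, Gv50, Gv51, Gv52, Gv53, Gv54, Gv55, Gv56, Gv60, Gv61, Gv62, Gv63, Gv64, Gv65, Gv66]) (by rw [hpr 1]; norm_num [Fin.sum_univ_seven, show (![0, 0, 1, 1, 1, 0, 0] : Fin 7 → ℤ) 0 = 0 from rfl, show (![0, 0, 1, 1, 1, 0, 0] : Fin 7 → ℤ) 1 = 0 from rfl, show (![0, 0, 1, 1, 1, 0, 0] : Fin 7 → ℤ) 2 = 1 from rfl, show (![0, 0, 1, 1, 1, 0, 0] : Fin 7 → ℤ) 3 = 1 from rfl, show (![0, 0, 1, 1, 1, 0, 0] : Fin 7 → ℤ) 4 = 1 from rfl, show (![0, 0, 1, 1, 1, 0, 0] : Fin 7 → ℤ) 5 = 0 from rfl, show (![0, 0, 1, 1, 1, 0, 0] : Fin 7 → ℤ) 6 = 0 from rfl, Gv00, Gv01, Gv02, Gv03, Gv04, Gv05, Gv06, Gv10, Gv11,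 Gv12, Gv13, Gv14, Gv15, Gv16, Gv20, Gv21, Gv22, Gv23, Gv24, Gv25, Gv26, Gv30, Gv31, Gv32, Gv33, Gv34, Gv35, Gv36, Gv40, Gv41, Gv42, Gv43, Gv44, Gv45, Gv46, Gv50, Gv51, Gv52, Gv53, Gv54, Gv55, Gv56, Gv60, Gv61, Gv62, Gv63, Gv64, Gv65, Gv66]) (by rw [hpr 5]; norm_num [Fin.sum_univ_seven, show (![0, 0, 1, 1, 1, 0, 0] : Fin 7 → ℤ) 0 = 0 from rfl, show (![0, 0, 1, 1, 1, 0, 0] : Fin 7 → ℤ) 1 = 0 from rfl, show (![0, 0, 1, 1, 1, 0, 0] : Fin 7 → ℤ) 2 = 1 from rfl, show (![0, 0, 1, 1, 1, 0, 0] : Fin 7 → ℤ) 3 = 1 from rfl, show (![0, 0, 1, 1, 1, 0, 0] : Fin 7 → ℤ) 4 = 1 from rfl, show (![0, 0, 1, 1, 1, 0, 0] : Fin 7 → ℤ) 5 = 0 from rfl, show (![0, 0, 1, 1, 1, 0, 0] : Fin 7 → ℤ) 6 = 0 from rfl, Gv00, Gv01, Gv02, Gv03, Gv04, Gv05, Gv06,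 Gv10, Gv11, Gv12, Gv13, Gv14, Gv15, Gv16, Gv20, Gv21, Gv22, Gv23, Gv24, Gv25, Gv26, Gv30, Gv31, Gv32, Gv33, Gv34, Gv35, Gv36, Gv40, Gv41, Gv42, Gv43, Gv44, Gv45, Gv46, Gv50, Gv51, Gv52, Gv53, Gv54, Gv55, Gv56, Gv60, Gv61, Gv62, Gv63, Gv64, Gv65, Gv66]) (by rw [hco0, z1]) (by rw [hco1, z2]) (by rw [hco5, z3])
    · have z1 : a = 0 := by linarith [ha, hb, hg]
      have z2 : b = 0 := by linarith [ha, hb, hg]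
      have z3 : g = 0 := by linarith [ha, hb, hg]
      set dlt := ∑ t, ((![0, 0, 1, 1, 1, 1, 0] : Fin 7 → ℤ) t : ℝ) • sroot t with hdlt
      have hdm : dlt ∈ Phi := by
        refine ⟨⟨![0, 0, 1, 1, 1, 1, 0], rfl⟩, ?_⟩
        rw [hdlt, bform]
        norm_num [Fin.sum_univ_seven, show (![0, 0, 1, 1, 1, 1, 0] : Fin 7 → ℤ) 0 = 0 from rfl, show (![0, 0, 1, 1, 1, 1, 0] : Fin 7 → ℤ) 1 = 0 from rfl, show (![0, 0, 1, 1, 1, 1, 0] : Fin 7 → ℤ) 2 = 1 from rfl, show (![0, 0, 1, 1, 1, 1, 0] : Fin 7 → ℤ) 3 = 1 from rfl, show (![0, 0, 1, 1, 1, 1, 0] : Fin 7 → ℤ) 4 = 1 from rfl, show (![0, 0, 1, 1, 1, 1, 0] : Fin 7 → ℤ) 5 = 1 from rfl, show (![0, 0, 1, 1, 1, 1, 0] : Fin 7 → ℤ) 6 = 0 from rfl, Gv00, Gv01, Gv02, Gv03, Gv04, Gv05, Gv06, Gv10, Gv11, Gv12, Gv13, Gv14, Gv15, Gv16, Gv20,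 Gv21, Gv22, Gv23, Gv24, Gv25, Gv26, Gv30, Gv31, Gv32, Gv33, Gv34, Gv35, Gv36, Gv40, Gv41, Gv42, Gv43, Gv44, Gv45, Gv46, Gv50, Gv51, Gv52, Gv53, Gv54, Gv55, Gv56, Gv60, Gv61, Gv62, Gv63, Gv64, Gv65, Gv66]
      have hpr : ∀ k : Fin 7, ip dlt (sroot k) = ((![0, 0, 1, 1, 1, 1, 0] : Fin 7 → ℤ) 0 : ℝ) * (G 0 k : ℝ)
          + ((![0, 0, 1, 1, 1, 1, 0] : Fin 7 → ℤ) 1 : ℝ) * (G 1 k : ℝ) + ((![0, 0, 1, 1, 1, 1, 0] : Fin 7 → ℤ) 2 : ℝ) * (G 2 k : ℝ)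
          + ((![0, 0, 1, 1, 1, 1, 0] : Fin 7 → ℤ) 3 : ℝ) * (G 3 k : ℝ) + ((![0, 0, 1, 1, 1, 1, 0] : Fin 7 → ℤ) 4 : ℝ) * (G 4 k : ℝ)
          + ((![0, 0, 1, 1, 1, 1, 0] : Fin 7 → ℤ) 5 : ℝ) * (G 5 k : ℝ) + ((![0, 0, 1, 1, 1, 1, 0] : Fin 7 → ℤ) 6 : ℝ) * (G 6 k : ℝ) := by
        intro k
        rw [hdlt, ip_comb_left]
        simp only [Fin.sum_univ_seven, gram]
      exact QUAD (sroot 0) (sroot 1) (sroot 6) dlt (sroot_mem_Phi 0) (sroot_mem_Phi 1) (sroot_mem_Phi 6) hdm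
        (by rw [gram, Gv01]; norm_num) (by rw [gram, Gv06]; norm_num) (by rw [gram, Gv16]; norm_num)
        (by rw [hpr 0]; norm_num [Fin.sum_univ_seven, show (![0, 0, 1, 1, 1, 1, 0] : Fin 7 → ℤ) 0 = 0 from rfl, show (![0, 0, 1, 1, 1, 1, 0] : Fin 7 → ℤ) 1 = 0 from rfl, show (![0, 0, 1, 1, 1, 1, 0] : Fin 7 → ℤ) 2 = 1 from rfl, show (![0, 0, 1, 1, 1, 1, 0] : Fin 7 → ℤ) 3 = 1 from rfl, show (![0, 0, 1, 1, 1, 1, 0] : Fin 7 → ℤ) 4 = 1 from rfl, show (![0, 0, 1, 1, 1, 1, 0] : Fin 7 → ℤ) 5 = 1 from rfl, show (![0, 0, 1, 1, 1, 1, 0] : Fin 7 → ℤ) 6 = 0 from rfl, Gv00, Gv01, Gv02, Gv03, Gv04, Gv05, Gv06, Gv10, Gv11, Gv12, Gv13, Gv14, Gv15, Gv16, Gv20, Gv21, Gv22, Gv23, Gv24, Gv25, Gv26, Gv30, Gv31, Gv32, Gv33, Gv34, Gv35, Gv36, Gv40, Gv41, Gv42, Gv43, Gv44, Gv45, Gv46,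 Gv50, Gv51, Gv52, Gv53, Gv54, Gv55, Gv56, Gv60, Gv61, Gv62, Gv63, Gv64, Gv65, Gv66]) (by rw [hpr 1]; norm_num [Fin.sum_univ_seven, show (![0, 0, 1, 1, 1, 1, 0] : Fin 7 → ℤ) 0 = 0 from rfl, show (![0, 0, 1, 1, 1, 1, 0] : Fin 7 → ℤ) 1 = 0 from rfl, show (![0, 0, 1, 1, 1, 1, 0] : Fin 7 → ℤ) 2 = 1 from rfl, show (![0, 0, 1, 1, 1, 1, 0] : Fin 7 → ℤ) 3 = 1 from rfl, show (![0, 0, 1, 1, 1, 1, 0] : Fin 7 → ℤ) 4 = 1 from rfl, show (![0, 0, 1, 1, 1, 1, 0] : Fin 7 → ℤ) 5 = 1 from rfl, show (![0, 0, 1, 1, 1, 1, 0] : Fin 7 → ℤ) 6 = 0 from rfl, Gv00, Gv01, Gv02, Gv03, Gv04, Gv05, Gv06, Gv10, Gv11, Gv12, Gv13, Gv14, Gv15, Gv16, Gv20, Gv21, Gv22, Gv23, Gv24, Gv25, Gv26, Gv30, Gv31, Gv32, Gv33, Gv34, Gv35, Gv36, Gv40, Gv41, Gv42, Gv43, Gv44,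 Gv45, Gv46, Gv50, Gv51, Gv52, Gv53, Gv54, Gv55, Gv56, Gv60, Gv61, Gv62, Gv63, Gv64, Gv65, Gv66]) (by rw [hpr 6]; norm_num [Fin.sum_univ_seven, show (![0, 0, 1, 1, 1, 1, 0] : Fin 7 → ℤ) 0 = 0 from rfl, show (![0, 0, 1, 1, 1, 1, 0] : Fin 7 → ℤ) 1 = 0 from rfl, show (![0, 0, 1, 1, 1, 1, 0] : Fin 7 → ℤ) 2 = 1 from rfl, show (![0, 0, 1, 1, 1, 1, 0] : Fin 7 → ℤ) 3 = 1 from rfl, show (![0, 0, 1, 1, 1, 1, 0] : Fin 7 → ℤ) 4 = 1 from rfl, show (![0, 0, 1, 1, 1, 1, 0] : Fin 7 → ℤ) 5 = 1 from rfl, show (![0, 0, 1, 1, 1, 1, 0] : Fin 7 → ℤ) 6 = 0 from rfl, Gv00, Gv01, Gv02, Gv03, Gv04, Gv05, Gv06, Gv10, Gv11, Gv12, Gv13, Gv14, Gv15, Gv16, Gv20, Gv21, Gv22, Gv23, Gv24, Gv25, Gv26, Gv30, Gv31, Gv32, Gv33, Gv34, Gv35, Gv36, Gv40, Gv41, Gv42,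 Gv43, Gv44, Gv45, Gv46, Gv50, Gv51, Gv52, Gv53, Gv54, Gv55, Gv56, Gv60, Gv61, Gv62, Gv63, Gv64, Gv65, Gv66]) (by rw [hco0, z1]) (by rw [hco1, z2]) (by rw [hco6, z3])
    · have z1 : a = 0 := by linarith [ha, hd, hf]
      have z2 : d = 0 := by linarith [ha, hd, hf]
      have z3 : f = 0 := by linarith [ha, hd, hf]
      set dlt := ∑ t, ((![0, 1, 1, 1, 1, 0, 0] : Fin 7 → ℤ) t : ℝ) • sroot t with hdlt
      have hdm : dlt ∈ Phi := by
        refine ⟨⟨![0, 1, 1, 1, 1, 0, 0], rfl⟩, ?_⟩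
        rw [hdlt, bform]
        norm_num [Fin.sum_univ_seven, show (![0, 1, 1, 1, 1, 0, 0] : Fin 7 → ℤ) 0 = 0 from rfl, show (![0, 1, 1, 1, 1, 0, 0] : Fin 7 → ℤ) 1 = 1 from rfl, show (![0, 1, 1, 1, 1, 0, 0] : Fin 7 → ℤ) 2 = 1 from rfl, show (![0, 1, 1, 1, 1, 0, 0] : Fin 7 → ℤ) 3 = 1 from rfl, show (![0, 1, 1, 1, 1, 0, 0] : Fin 7 → ℤ) 4 = 1 from rfl, show (![0, 1, 1, 1, 1, 0, 0] : Fin 7 → ℤ) 5 = 0 from rfl, show (![0, 1, 1, 1, 1, 0, 0] : Fin 7 → ℤ) 6 = 0 from rfl, Gv00, Gv01, Gv02, Gv03, Gv04, Gv05, Gv06, Gv10, Gv11, Gv12, Gv13, Gv14, Gv15, Gv16, Gv20, Gv21, Gv22, Gv23, Gv24, Gv25, Gv26, Gv30, Gv31, Gv32, Gv33, Gv34, Gv35, Gv36, Gv40, Gv41, Gv42, Gv43, Gv44, Gv45, Gv46, Gv50, Gv51, Gv52, Gv53, Gv54, Gv55, Gv56, Gv60, Gv61, Gv62, Gv63, Gv64,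 Gv65, Gv66]
      have hpr : ∀ k : Fin 7, ip dlt (sroot k) = ((![0, 1, 1, 1, 1, 0, 0] : Fin 7 → ℤ) 0 : ℝ) * (G 0 k : ℝ)
          + ((![0, 1, 1, 1, 1, 0, 0] : Fin 7 → ℤ) 1 : ℝ) * (G 1 k : ℝ) + ((![0, 1, 1, 1, 1, 0, 0] : Fin 7 → ℤ) 2 : ℝ) * (G 2 k : ℝ)
          + ((![0, 1, 1, 1, 1, 0, 0] : Fin 7 → ℤ) 3 : ℝ) * (G 3 k : ℝ) + ((![0, 1, 1, 1, 1, 0, 0] : Fin 7 → ℤ) 4 : ℝ) * (G 4 k : ℝ)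
          + ((![0, 1, 1, 1, 1, 0, 0] : Fin 7 → ℤ) 5 : ℝ) * (G 5 k : ℝ) + ((![0, 1, 1, 1, 1, 0, 0] : Fin 7 → ℤ) 6 : ℝ) * (G 6 k : ℝ) := by
        intro k
        rw [hdlt, ip_comb_left]
        simp only [Fin.sum_univ_seven, gram]
      exact QUAD (sroot 0) (sroot 3) (sroot 5) dlt (sroot_mem_Phi 0) (sroot_mem_Phi 3) (sroot_mem_Phi 5) hdm
        (by rw [gram, Gv03]; norm_num) (by rw [gram, Gv05]; norm_num) (by rw [gram, Gv35]; norm_num)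
        (by rw [hpr 0]; norm_num [Fin.sum_univ_seven, show (![0, 1, 1, 1, 1, 0, 0] : Fin 7 → ℤ) 0 = 0 from rfl, show (![0, 1, 1, 1, 1, 0, 0] : Fin 7 → ℤ) 1 = 1 from rfl, show (![0, 1, 1, 1, 1, 0, 0] : Fin 7 → ℤ) 2 = 1 from rfl, show (![0, 1, 1, 1, 1, 0, 0] : Fin 7 → ℤ) 3 = 1 from rfl, show (![0, 1, 1, 1, 1, 0, 0] : Fin 7 → ℤ) 4 = 1 from rfl, show (![0, 1, 1, 1, 1, 0, 0] : Fin 7 → ℤ) 5 = 0 from rfl, show (![0, 1, 1, 1, 1, 0, 0] : Fin 7 → ℤ) 6 = 0 from rfl, Gv00, Gv01, Gv02, Gv03, Gv04, Gv05, Gv06, Gv10, Gv11, Gv12, Gv13, Gv14, Gv15, Gv16, Gv20, Gv21, Gv22, Gv23, Gv24, Gv25, Gv26, Gv30, Gv31, Gv32, Gv33, Gv34, Gv35, Gv36, Gv40, Gv41, Gv42, Gv43, Gv44, Gv45, Gv46, Gv50, Gv51, Gv52, Gv53, Gv54, Gv55, Gv56, Gv60, Gv61, Gv62, Gv63, Gv64,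 Gv65, Gv66]) (by rw [hpr 3]; norm_num [Fin.sum_univ_seven, show (![0, 1, 1, 1, 1, 0, 0] : Fin 7 → ℤ) 0 = 0 from rfl, show (![0, 1, 1, 1, 1, 0, 0] : Fin 7 → ℤ) 1 = 1 from rfl, show (![0, 1, 1, 1, 1, 0, 0] : Fin 7 → ℤ) 2 = 1 from rfl, show (![0, 1, 1, 1, 1, 0, 0] : Fin 7 → ℤ) 3 = 1 from rfl, show (![0, 1, 1, 1, 1, 0, 0] : Fin 7 → ℤ) 4 = 1 from rfl, show (![0, 1, 1, 1, 1, 0, 0] : Fin 7 → ℤ) 5 = 0 from rfl, show (![0, 1, 1, 1, 1, 0, 0] : Fin 7 → ℤ) 6 = 0 from rfl, Gv00, Gv01, Gv02, Gv03, Gv04, Gv05, Gv06, Gv10, Gv11, Gv12, Gv13, Gv14, Gv15, Gv16, Gv20, Gv21, Gv22, Gv23, Gv24, Gv25, Gv26, Gv30, Gv31, Gv32, Gv33, Gv34, Gv35, Gv36, Gv40, Gv41, Gv42, Gv43, Gv44, Gv45, Gv46, Gv50, Gv51, Gv52, Gv53, Gv54, Gv55, Gv56, Gv60, Gv61, Gv62,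 Gv63, Gv64, Gv65, Gv66]) (by rw [hpr 5]; norm_num [Fin.sum_univ_seven, show (![0, 1, 1, 1, 1, 0, 0] : Fin 7 → ℤ) 0 = 0 from rfl, show (![0, 1, 1, 1, 1, 0, 0] : Fin 7 → ℤ) 1 = 1 from rfl, show (![0, 1, 1, 1, 1, 0, 0] : Fin 7 → ℤ) 2 = 1 from rfl, show (![0, 1, 1, 1, 1, 0, 0] : Fin 7 → ℤ) 3 = 1 from rfl, show (![0, 1, 1, 1, 1, 0, 0] : Fin 7 → ℤ) 4 = 1 from rfl, show (![0, 1, 1, 1, 1, 0, 0] : Fin 7 → ℤ) 5 = 0 from rfl, show (![0, 1, 1, 1, 1, 0, 0] : Fin 7 → ℤ) 6 = 0 from rfl, Gv00, Gv01, Gv02, Gv03, Gv04, Gv05, Gv06, Gv10, Gv11, Gv12, Gv13, Gv14, Gv15, Gv16, Gv20, Gv21, Gv22, Gv23, Gv24, Gv25, Gv26, Gv30, Gv31, Gv32, Gv33, Gv34, Gv35, Gv36, Gv40, Gv41, Gv42, Gv43, Gv44, Gv45, Gv46, Gv50, Gv51, Gv52, Gv53, Gv54, Gv55, Gv56, Gv60,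 Gv61, Gv62, Gv63, Gv64, Gv65, Gv66]) (by rw [hco0, z1]) (by rw [hco3, z2]) (by rw [hco5, z3])
    · have z1 : a = 0 := by linarith [ha, hd, hg]
      have z2 : d = 0 := by linarith [ha, hd, hg]
      have z3 : g = 0 := by linarith [ha, hd, hg]
      set dlt := ∑ t, ((![0, 1, 1, 1, 1, 1, 0] : Fin 7 → ℤ) t : ℝ) • sroot t with hdlt
      have hdm : dlt ∈ Phi := by
        refine ⟨⟨![0, 1, 1, 1, 1, 1, 0], rfl⟩, ?_⟩
        rw [hdlt, bform]
        norm_num [Fin.sum_univ_seven, show (![0, 1, 1, 1, 1, 1, 0] : Fin 7 → ℤ) 0 = 0 from rfl, show (![0, 1, 1, 1, 1, 1, 0] : Fin 7 → ℤ) 1 = 1 from rfl, show (![0, 1, 1, 1, 1, 1, 0] : Fin 7 → ℤ) 2 = 1 from rfl, show (![0, 1, 1, 1, 1, 1, 0] : Fin 7 → ℤ) 3 = 1 from rfl, show (![0, 1, 1, 1, 1, 1, 0] : Fin 7 → ℤ) 4 = 1 from rfl, show (![0, 1, 1, 1, 1, 1, 0] : Fin 7 → ℤ) 5 = 1 from rfl,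 show (![0, 1, 1, 1, 1, 1, 0] : Fin 7 → ℤ) 6 = 0 from rfl, Gv00, Gv01, Gv02, Gv03, Gv04, Gv05, Gv06, Gv10, Gv11, Gv12, Gv13, Gv14, Gv15, Gv16, Gv20, Gv21, Gv22, Gv23, Gv24, Gv25, Gv26, Gv30, Gv31, Gv32, Gv33, Gv34, Gv35, Gv36, Gv40, Gv41, Gv42, Gv43, Gv44, Gv45, Gv46, Gv50, Gv51, Gv52, Gv53, Gv54, Gv55, Gv56, Gv60, Gv61, Gv62, Gv63, Gv64, Gv65, Gv66]
      have hpr : ∀ k : Fin 7, ip dlt (sroot k) = ((![0, 1, 1, 1, 1, 1, 0] : Fin 7 → ℤ) 0 : ℝ) * (G 0 k : ℝ)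
          + ((![0, 1, 1, 1, 1, 1, 0] : Fin 7 → ℤ) 1 : ℝ) * (G 1 k : ℝ) + ((![0, 1, 1, 1, 1, 1, 0] : Fin 7 → ℤ) 2 : ℝ) * (G 2 k : ℝ)
          + ((![0, 1, 1, 1, 1, 1, 0] : Fin 7 → ℤ) 3 : ℝ) * (G 3 k : ℝ) + ((![0, 1, 1, 1, 1, 1, 0] : Fin 7 → ℤ) 4 : ℝ) * (G 4 k : ℝ)
          + ((![0, 1, 1, 1, 1, 1, 0] : Fin 7 → ℤ) 5 : ℝ) * (G 5 k : ℝ) + ((![0, 1, 1, 1, 1, 1, 0] : Fin 7 → ℤ) 6 : ℝ) * (G 6 k : ℝ) := by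
        intro k
        rw [hdlt, ip_comb_left]
        simp only [Fin.sum_univ_seven, gram]
      exact QUAD (sroot 0) (sroot 3) (sroot 6) dlt (sroot_mem_Phi 0) (sroot_mem_Phi 3) (sroot_mem_Phi 6) hdm
        (by rw [gram, Gv03]; norm_num) (by rw [gram, Gv06]; norm_num) (by rw [gram, Gv36]; norm_num)
        (by rw [hpr 0]; norm_num [Fin.sum_univ_seven, show (![0, 1, 1, 1, 1, 1, 0] : Fin 7 → ℤ) 0 = 0 from rfl, show (![0, 1, 1, 1, 1, 1, 0] : Fin 7 → ℤ) 1 = 1 from rfl, show (![0, 1, 1, 1, 1, 1, 0] : Fin 7 → ℤ) 2 = 1 from rfl, show (![0, 1, 1, 1, 1, 1, 0] : Fin 7 → ℤ) 3 = 1 from rfl, show (![0, 1, 1, 1, 1, 1, 0] : Fin 7 → ℤ) 4 = 1 from rfl, show (![0, 1, 1, 1, 1, 1, 0] : Fin 7 → ℤ) 5 = 1 from rfl, show (![0, 1, 1, 1, 1, 1, 0] : Fin 7 → ℤ) 6 = 0 from rfl, Gv00, Gv01, Gv02, Gv03, Gv04, Gv05, Gv06, Gv10, Gv11, Gv12, Gv13,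 Gv14, Gv15, Gv16, Gv20, Gv21, Gv22, Gv23, Gv24, Gv25, Gv26, Gv30, Gv31, Gv32, Gv33, Gv34, Gv35, Gv36, Gv40, Gv41, Gv42, Gv43, Gv44, Gv45, Gv46, Gv50, Gv51, Gv52, Gv53, Gv54, Gv55, Gv56, Gv60, Gv61, Gv62, Gv63, Gv64, Gv65, Gv66]) (by rw [hpr 3]; norm_num [Fin.sum_univ_seven, show (![0, 1, 1, 1, 1, 1, 0] : Fin 7 → ℤ) 0 = 0 from rfl, show (![0, 1, 1, 1, 1, 1, 0] : Fin 7 → ℤ) 1 = 1 from rfl, show (![0, 1, 1, 1, 1, 1, 0] : Fin 7 → ℤ) 2 = 1 from rfl, show (![0, 1, 1, 1, 1, 1, 0] : Fin 7 → ℤ) 3 = 1 from rfl, show (![0, 1, 1, 1, 1, 1, 0] : Fin 7 → ℤ) 4 = 1 from rfl, show (![0, 1, 1, 1, 1, 1, 0] : Fin 7 → ℤ) 5 = 1 from rfl, show (![0, 1, 1, 1, 1, 1, 0] : Fin 7 → ℤ) 6 = 0 from rfl, Gv00, Gv01, Gv02, Gv03, Gv04, Gv05, Gv06, Gv10, Gv11,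 Gv12, Gv13, Gv14, Gv15, Gv16, Gv20, Gv21, Gv22, Gv23, Gv24, Gv25, Gv26, Gv30, Gv31, Gv32, Gv33, Gv34, Gv35, Gv36, Gv40, Gv41, Gv42, Gv43, Gv44, Gv45, Gv46, Gv50, Gv51, Gv52, Gv53, Gv54, Gv55, Gv56, Gv60, Gv61, Gv62, Gv63, Gv64, Gv65, Gv66]) (by rw [hpr 6]; norm_num [Fin.sum_univ_seven, show (![0, 1, 1, 1, 1, 1, 0] : Fin 7 → ℤ) 0 = 0 from rfl, show (![0, 1, 1, 1, 1, 1, 0] : Fin 7 → ℤ) 1 = 1 from rfl, show (![0, 1, 1, 1, 1, 1, 0] : Fin 7 → ℤ) 2 = 1 from rfl, show (![0, 1, 1, 1, 1, 1, 0] : Fin 7 → ℤ) 3 = 1 from rfl, show (![0, 1, 1, 1, 1, 1, 0] : Fin 7 → ℤ) 4 = 1 from rfl, show (![0, 1, 1, 1, 1, 1, 0] : Fin 7 → ℤ) 5 = 1 from rfl, show (![0, 1, 1, 1, 1, 1, 0] : Fin 7 → ℤ) 6 = 0 from rfl, Gv00, Gv01, Gv02, Gv03, Gv04, Gv05, Gv06,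 Gv10, Gv11, Gv12, Gv13, Gv14, Gv15, Gv16, Gv20, Gv21, Gv22, Gv23, Gv24, Gv25, Gv26, Gv30, Gv31, Gv32, Gv33, Gv34, Gv35, Gv36, Gv40, Gv41, Gv42, Gv43, Gv44, Gv45, Gv46, Gv50, Gv51, Gv52, Gv53, Gv54, Gv55, Gv56, Gv60, Gv61, Gv62, Gv63, Gv64, Gv65, Gv66]) (by rw [hco0, z1]) (by rw [hco3, z2]) (by rw [hco6, z3])
    · have z1 : a = 0 := by linarith [ha, he, hg]
      have z2 : e = 0 := by linarith [ha, he, hg]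
      have z3 : g = 0 := by linarith [ha, he, hg]
      set dlt := ∑ t, ((![0, 1, 1, 2, 1, 1, 0] : Fin 7 → ℤ) t : ℝ) • sroot t with hdlt
      have hdm : dlt ∈ Phi := by
        refine ⟨⟨![0, 1, 1, 2, 1, 1, 0], rfl⟩, ?_⟩
        rw [hdlt, bform]
        norm_num [Fin.sum_univ_seven, show (![0, 1, 1, 2, 1, 1, 0] : Fin 7 → ℤ) 0 = 0 from rfl, show (![0, 1, 1, 2, 1, 1, 0] : Fin 7 → ℤ) 1 = 1 from rfl, show (![0, 1, 1, 2, 1, 1, 0] : Fin 7 → ℤ) 2 = 1 from rfl, show (![0, 1, 1, 2, 1, 1, 0] : Fin 7 → ℤ) 3 = 2 from rfl, show (![0, 1, 1, 2, 1, 1, 0] : Fin 7 → ℤ) 4 = 1 from rfl, show (![0, 1, 1, 2, 1, 1, 0] : Fin 7 → ℤ) 5 = 1 from rfl, show (![0, 1, 1, 2, 1, 1, 0] : Fin 7 → ℤ) 6 = 0 from rfl, Gv00, Gv01, Gv02, Gv03, Gv04, Gv05, Gv06, Gv10, Gv11, Gv12, Gv13, Gv14, Gv15, Gv16, Gv20,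 Gv21, Gv22, Gv23, Gv24, Gv25, Gv26, Gv30, Gv31, Gv32, Gv33, Gv34, Gv35, Gv36, Gv40, Gv41, Gv42, Gv43, Gv44, Gv45, Gv46, Gv50, Gv51, Gv52, Gv53, Gv54, Gv55, Gv56, Gv60, Gv61, Gv62, Gv63, Gv64, Gv65, Gv66]
      have hpr : ∀ k : Fin 7, ip dlt (sroot k) = ((![0, 1, 1, 2, 1, 1, 0] : Fin 7 → ℤ) 0 : ℝ) * (G 0 k : ℝ)
          + ((![0, 1, 1, 2, 1, 1, 0] : Fin 7 → ℤ) 1 : ℝ) * (G 1 k : ℝ) + ((![0, 1, 1, 2, 1, 1, 0] : Fin 7 → ℤ) 2 : ℝ) * (G 2 k : ℝ)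
          + ((![0, 1, 1, 2, 1, 1, 0] : Fin 7 → ℤ) 3 : ℝ) * (G 3 k : ℝ) + ((![0, 1, 1, 2, 1, 1, 0] : Fin 7 → ℤ) 4 : ℝ) * (G 4 k : ℝ)
          + ((![0, 1, 1, 2, 1, 1, 0] : Fin 7 → ℤ) 5 : ℝ) * (G 5 k : ℝ) + ((![0, 1, 1, 2, 1, 1, 0] : Fin 7 → ℤ) 6 : ℝ) * (G 6 k : ℝ) := by
        intro k
        rw [hdlt, ip_comb_left]
        simp only [Fin.sum_univ_seven, gram]
      exact QUAD (sroot 0) (sroot 4) (sroot 6) dlt (sroot_mem_Phi 0) (sroot_mem_Phi 4) (sroot_mem_Phi 6) hdm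
        (by rw [gram, Gv04]; norm_num) (by rw [gram, Gv06]; norm_num) (by rw [gram, Gv46]; norm_num)
        (by rw [hpr 0]; norm_num [Fin.sum_univ_seven, show (![0, 1, 1, 2, 1, 1, 0] : Fin 7 → ℤ) 0 = 0 from rfl, show (![0, 1, 1, 2, 1, 1, 0] : Fin 7 → ℤ) 1 = 1 from rfl, show (![0, 1, 1, 2, 1, 1, 0] : Fin 7 → ℤ) 2 = 1 from rfl, show (![0, 1, 1, 2, 1, 1, 0] : Fin 7 → ℤ) 3 = 2 from rfl, show (![0, 1, 1, 2, 1, 1, 0] : Fin 7 → ℤ) 4 = 1 from rfl, show (![0, 1, 1, 2, 1, 1, 0] : Fin 7 → ℤ) 5 = 1 from rfl, show (![0, 1, 1, 2, 1, 1, 0] : Fin 7 → ℤ) 6 = 0 from rfl, Gv00, Gv01, Gv02, Gv03, Gv04, Gv05, Gv06, Gv10, Gv11, Gv12, Gv13, Gv14, Gv15, Gv16, Gv20, Gv21, Gv22, Gv23, Gv24, Gv25, Gv26, Gv30, Gv31, Gv32, Gv33, Gv34, Gv35, Gv36, Gv40, Gv41, Gv42, Gv43, Gv44, Gv45, Gv46,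 Gv50, Gv51, Gv52, Gv53, Gv54, Gv55, Gv56, Gv60, Gv61, Gv62, Gv63, Gv64, Gv65, Gv66]) (by rw [hpr 4]; norm_num [Fin.sum_univ_seven, show (![0, 1, 1, 2, 1, 1, 0] : Fin 7 → ℤ) 0 = 0 from rfl, show (![0, 1, 1, 2, 1, 1, 0] : Fin 7 → ℤ) 1 = 1 from rfl, show (![0, 1, 1, 2, 1, 1, 0] : Fin 7 → ℤ) 2 = 1 from rfl, show (![0, 1, 1, 2, 1, 1, 0] : Fin 7 → ℤ) 3 = 2 from rfl, show (![0, 1, 1, 2, 1, 1, 0] : Fin 7 → ℤ) 4 = 1 from rfl, show (![0, 1, 1, 2, 1, 1, 0] : Fin 7 → ℤ) 5 = 1 from rfl, show (![0, 1, 1, 2, 1, 1, 0] : Fin 7 → ℤ) 6 = 0 from rfl, Gv00, Gv01, Gv02, Gv03, Gv04, Gv05, Gv06, Gv10, Gv11, Gv12, Gv13, Gv14, Gv15, Gv16, Gv20, Gv21, Gv22, Gv23, Gv24, Gv25, Gv26, Gv30, Gv31, Gv32, Gv33, Gv34, Gv35, Gv36, Gv40, Gv41, Gv42, Gv43, Gv44,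 Gv45, Gv46, Gv50, Gv51, Gv52, Gv53, Gv54, Gv55, Gv56, Gv60, Gv61, Gv62, Gv63, Gv64, Gv65, Gv66]) (by rw [hpr 6]; norm_num [Fin.sum_univ_seven, show (![0, 1, 1, 2, 1, 1, 0] : Fin 7 → ℤ) 0 = 0 from rfl, show (![0, 1, 1, 2, 1, 1, 0] : Fin 7 → ℤ) 1 = 1 from rfl, show (![0, 1, 1, 2, 1, 1, 0] : Fin 7 → ℤ) 2 = 1 from rfl, show (![0, 1, 1, 2, 1, 1, 0] : Fin 7 → ℤ) 3 = 2 from rfl, show (![0, 1, 1, 2, 1, 1, 0] : Fin 7 → ℤ) 4 = 1 from rfl, show (![0, 1, 1, 2, 1, 1, 0] : Fin 7 → ℤ) 5 = 1 from rfl, show (![0, 1, 1, 2, 1, 1, 0] : Fin 7 → ℤ) 6 = 0 from rfl, Gv00, Gv01, Gv02, Gv03, Gv04, Gv05, Gv06, Gv10, Gv11, Gv12, Gv13, Gv14, Gv15, Gv16, Gv20, Gv21, Gv22, Gv23, Gv24, Gv25, Gv26, Gv30, Gv31, Gv32, Gv33, Gv34, Gv35, Gv36, Gv40, Gv41, Gv42,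 Gv43, Gv44, Gv45, Gv46, Gv50, Gv51, Gv52, Gv53, Gv54, Gv55, Gv56, Gv60, Gv61, Gv62, Gv63, Gv64, Gv65, Gv66]) (by rw [hco0, z1]) (by rw [hco4, z2]) (by rw [hco6, z3])
    · have z1 : b = 0 := by linarith [hb, hc, he]
      have z2 : c = 0 := by linarith [hb, hc, he]
      have z3 : e = 0 := by linarith [hb, hc, he]
      set dlt := ∑ t, ((![0, 0, 0, 1, 0, 0, 0] : Fin 7 → ℤ) t : ℝ) • sroot t with hdlt
      have hdm : dlt ∈ Phi := by
        refine ⟨⟨![0, 0, 0, 1, 0, 0, 0], rfl⟩, ?_⟩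
        rw [hdlt, bform]
        norm_num [Fin.sum_univ_seven, show (![0, 0, 0, 1, 0, 0, 0] : Fin 7 → ℤ) 0 = 0 from rfl, show (![0, 0, 0, 1, 0, 0, 0] : Fin 7 → ℤ) 1 = 0 from rfl, show (![0, 0, 0, 1, 0, 0, 0] : Fin 7 → ℤ) 2 = 0 from rfl, show (![0, 0, 0, 1, 0, 0, 0] : Fin 7 → ℤ) 3 = 1 from rfl, show (![0, 0, 0, 1, 0, 0, 0] : Fin 7 → ℤ) 4 = 0 from rfl, show (![0, 0, 0, 1, 0, 0, 0] : Fin 7 → ℤ) 5 = 0 from rfl, show (![0, 0, 0, 1, 0, 0, 0] : Fin 7 → ℤ) 6 = 0 from rfl, Gv00, Gv01, Gv02, Gv03, Gv04, Gv05, Gv06, Gv10, Gv11, Gv12, Gv13, Gv14, Gv15, Gv16, Gv20, Gv21, Gv22, Gv23, Gv24, Gv25, Gv26, Gv30, Gv31, Gv32, Gv33, Gv34, Gv35, Gv36, Gv40, Gv41, Gv42, Gv43, Gv44, Gv45, Gv46, Gv50, Gv51, Gv52, Gv53, Gv54, Gv55, Gv56, Gv60, Gv61, Gv62, Gv63, Gv64,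 Gv65, Gv66]
      have hpr : ∀ k : Fin 7, ip dlt (sroot k) = ((![0, 0, 0, 1, 0, 0, 0] : Fin 7 → ℤ) 0 : ℝ) * (G 0 k : ℝ)
          + ((![0, 0, 0, 1, 0, 0, 0] : Fin 7 → ℤ) 1 : ℝ) * (G 1 k : ℝ) + ((![0, 0, 0, 1, 0, 0, 0] : Fin 7 → ℤ) 2 : ℝ) * (G 2 k : ℝ)
          + ((![0, 0, 0, 1, 0, 0, 0] : Fin 7 → ℤ) 3 : ℝ) * (G 3 k : ℝ) + ((![0, 0, 0, 1, 0, 0, 0] : Fin 7 → ℤ) 4 : ℝ) * (G 4 k : ℝ)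
          + ((![0, 0, 0, 1, 0, 0, 0] : Fin 7 → ℤ) 5 : ℝ) * (G 5 k : ℝ) + ((![0, 0, 0, 1, 0, 0, 0] : Fin 7 → ℤ) 6 : ℝ) * (G 6 k : ℝ) := by
        intro k
        rw [hdlt, ip_comb_left]
        simp only [Fin.sum_univ_seven, gram]
      exact QUAD (sroot 1) (sroot 2) (sroot 4) dlt (sroot_mem_Phi 1) (sroot_mem_Phi 2) (sroot_mem_Phi 4) hdm
        (by rw [gram, Gv12]; norm_num) (by rw [gram, Gv14]; norm_num) (by rw [gram, Gv24]; norm_num)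
        (by rw [hpr 1]; norm_num [Fin.sum_univ_seven, show (![0, 0, 0, 1, 0, 0, 0] : Fin 7 → ℤ) 0 = 0 from rfl, show (![0, 0, 0, 1, 0, 0, 0] : Fin 7 → ℤ) 1 = 0 from rfl, show (![0, 0, 0, 1, 0, 0, 0] : Fin 7 → ℤ) 2 = 0 from rfl, show (![0, 0, 0, 1, 0, 0, 0] : Fin 7 → ℤ) 3 = 1 from rfl, show (![0, 0, 0, 1, 0, 0, 0] : Fin 7 → ℤ) 4 = 0 from rfl, show (![0, 0, 0, 1, 0, 0, 0] : Fin 7 → ℤ) 5 = 0 from rfl, show (![0, 0, 0, 1, 0, 0, 0] : Fin 7 → ℤ) 6 = 0 from rfl, Gv00, Gv01, Gv02, Gv03, Gv04, Gv05, Gv06, Gv10, Gv11, Gv12, Gv13, Gv14, Gv15, Gv16, Gv20, Gv21, Gv22, Gv23, Gv24, Gv25, Gv26, Gv30, Gv31, Gv32, Gv33, Gv34, Gv35, Gv36, Gv40, Gv41, Gv42, Gv43, Gv44, Gv45, Gv46, Gv50, Gv51, Gv52, Gv53, Gv54, Gv55, Gv56, Gv60, Gv61, Gv62, Gv63, Gv64,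 Gv65, Gv66]) (by rw [hpr 2]; norm_num [Fin.sum_univ_seven, show (![0, 0, 0, 1, 0, 0, 0] : Fin 7 → ℤ) 0 = 0 from rfl, show (![0, 0, 0, 1, 0, 0, 0] : Fin 7 → ℤ) 1 = 0 from rfl, show (![0, 0, 0, 1, 0, 0, 0] : Fin 7 → ℤ) 2 = 0 from rfl, show (![0, 0, 0, 1, 0, 0, 0] : Fin 7 → ℤ) 3 = 1 from rfl, show (![0, 0, 0, 1, 0, 0, 0] : Fin 7 → ℤ) 4 = 0 from rfl, show (![0, 0, 0, 1, 0, 0, 0] : Fin 7 → ℤ) 5 = 0 from rfl, show (![0, 0, 0, 1, 0, 0, 0] : Fin 7 → ℤ) 6 = 0 from rfl, Gv00, Gv01, Gv02, Gv03, Gv04, Gv05, Gv06, Gv10, Gv11, Gv12, Gv13, Gv14, Gv15, Gv16, Gv20, Gv21, Gv22, Gv23, Gv24, Gv25, Gv26, Gv30, Gv31, Gv32, Gv33, Gv34, Gv35, Gv36, Gv40, Gv41, Gv42, Gv43, Gv44, Gv45, Gv46, Gv50, Gv51, Gv52, Gv53, Gv54, Gv55, Gv56, Gv60, Gv61, Gv62,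 Gv63, Gv64, Gv65, Gv66]) (by rw [hpr 4]; norm_num [Fin.sum_univ_seven, show (![0, 0, 0, 1, 0, 0, 0] : Fin 7 → ℤ) 0 = 0 from rfl, show (![0, 0, 0, 1, 0, 0, 0] : Fin 7 → ℤ) 1 = 0 from rfl, show (![0, 0, 0, 1, 0, 0, 0] : Fin 7 → ℤ) 2 = 0 from rfl, show (![0, 0, 0, 1, 0, 0, 0] : Fin 7 → ℤ) 3 = 1 from rfl, show (![0, 0, 0, 1, 0, 0, 0] : Fin 7 → ℤ) 4 = 0 from rfl, show (![0, 0, 0, 1, 0, 0, 0] : Fin 7 → ℤ) 5 = 0 from rfl, show (![0, 0, 0, 1, 0, 0, 0] : Fin 7 → ℤ) 6 = 0 from rfl, Gv00, Gv01, Gv02, Gv03, Gv04, Gv05, Gv06, Gv10, Gv11, Gv12, Gv13, Gv14, Gv15, Gv16, Gv20, Gv21, Gv22, Gv23, Gv24, Gv25, Gv26, Gv30, Gv31, Gv32, Gv33, Gv34, Gv35, Gv36, Gv40, Gv41, Gv42, Gv43, Gv44, Gv45, Gv46, Gv50, Gv51, Gv52, Gv53, Gv54, Gv55, Gv56, Gv60,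 Gv61, Gv62, Gv63, Gv64, Gv65, Gv66]) (by rw [hco1, z1]) (by rw [hco2, z2]) (by rw [hco4, z3])
    · have z1 : b = 0 := by linarith [hb, hc, hf]
      have z2 : c = 0 := by linarith [hb, hc, hf]
      have z3 : f = 0 := by linarith [hb, hc, hf]
      set dlt := ∑ t, ((![0, 0, 0, 1, 1, 0, 0] : Fin 7 → ℤ) t : ℝ) • sroot t with hdlt
      have hdm : dlt ∈ Phi := by
        refine ⟨⟨![0, 0, 0, 1, 1, 0, 0], rfl⟩, ?_⟩
        rw [hdlt, bform]
        norm_num [Fin.sum_univ_seven, show (![0, 0, 0, 1, 1, 0, 0] : Fin 7 → ℤ) 0 = 0 from rfl, show (![0, 0, 0, 1, 1, 0, 0] : Fin 7 → ℤ) 1 = 0 from rfl, show (![0, 0, 0, 1, 1, 0, 0] : Fin 7 → ℤ) 2 = 0 from rfl, show (![0, 0, 0, 1, 1, 0, 0] : Fin 7 → ℤ) 3 = 1 from rfl, show (![0, 0, 0, 1, 1, 0, 0] : Fin 7 → ℤ) 4 = 1 from rfl, show (![0, 0, 0, 1, 1, 0, 0] : Fin 7 → ℤ) 5 = 0 from rfl,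 show (![0, 0, 0, 1, 1, 0, 0] : Fin 7 → ℤ) 6 = 0 from rfl, Gv00, Gv01, Gv02, Gv03, Gv04, Gv05, Gv06, Gv10, Gv11, Gv12, Gv13, Gv14, Gv15, Gv16, Gv20, Gv21, Gv22, Gv23, Gv24, Gv25, Gv26, Gv30, Gv31, Gv32, Gv33, Gv34, Gv35, Gv36, Gv40, Gv41, Gv42, Gv43, Gv44, Gv45, Gv46, Gv50, Gv51, Gv52, Gv53, Gv54, Gv55, Gv56, Gv60, Gv61, Gv62, Gv63, Gv64, Gv65, Gv66]
      have hpr : ∀ k : Fin 7, ip dlt (sroot k) = ((![0, 0, 0, 1, 1, 0, 0] : Fin 7 → ℤ) 0 : ℝ) * (G 0 k : ℝ)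
          + ((![0, 0, 0, 1, 1, 0, 0] : Fin 7 → ℤ) 1 : ℝ) * (G 1 k : ℝ) + ((![0, 0, 0, 1, 1, 0, 0] : Fin 7 → ℤ) 2 : ℝ) * (G 2 k : ℝ)
          + ((![0, 0, 0, 1, 1, 0, 0] : Fin 7 → ℤ) 3 : ℝ) * (G 3 k : ℝ) + ((![0, 0, 0, 1, 1, 0, 0] : Fin 7 → ℤ) 4 : ℝ) * (G 4 k : ℝ)
          + ((![0, 0, 0, 1, 1, 0, 0] : Fin 7 → ℤ) 5 : ℝ) * (G 5 k : ℝ) + ((![0, 0, 0, 1, 1, 0, 0] : Fin 7 → ℤ) 6 : ℝ) * (G 6 k : ℝ) := by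
        intro k
        rw [hdlt, ip_comb_left]
        simp only [Fin.sum_univ_seven, gram]
      exact QUAD (sroot 1) (sroot 2) (sroot 5) dlt (sroot_mem_Phi 1) (sroot_mem_Phi 2) (sroot_mem_Phi 5) hdm
        (by rw [gram, Gv12]; norm_num) (by rw [gram, Gv15]; norm_num) (by rw [gram, Gv25]; norm_num)
        (by rw [hpr 1]; norm_num [Fin.sum_univ_seven, show (![0, 0, 0, 1, 1, 0, 0] : Fin 7 → ℤ) 0 = 0 from rfl, show (![0, 0, 0, 1, 1, 0, 0] : Fin 7 → ℤ) 1 = 0 from rfl, show (![0, 0, 0, 1, 1, 0, 0] : Fin 7 → ℤ) 2 = 0 from rfl, show (![0, 0, 0, 1, 1, 0, 0] : Fin 7 → ℤ) 3 = 1 from rfl, show (![0, 0, 0, 1, 1, 0, 0] : Fin 7 → ℤ) 4 = 1 from rfl, show (![0, 0, 0, 1, 1, 0, 0] : Fin 7 → ℤ) 5 = 0 from rfl, show (![0, 0, 0, 1, 1, 0, 0] : Fin 7 → ℤ) 6 = 0 from rfl, Gv00, Gv01, Gv02, Gv03, Gv04, Gv05, Gv06, Gv10, Gv11, Gv12, Gv13,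 Gv14, Gv15, Gv16, Gv20, Gv21, Gv22, Gv23, Gv24, Gv25, Gv26, Gv30, Gv31, Gv32, Gv33, Gv34, Gv35, Gv36, Gv40, Gv41, Gv42, Gv43, Gv44, Gv45, Gv46, Gv50, Gv51, Gv52, Gv53, Gv54, Gv55, Gv56, Gv60, Gv61, Gv62, Gv63, Gv64, Gv65, Gv66]) (by rw [hpr 2]; norm_num [Fin.sum_univ_seven, show (![0, 0, 0, 1, 1, 0, 0] : Fin 7 → ℤ) 0 = 0 from rfl, show (![0, 0, 0, 1, 1, 0, 0] : Fin 7 → ℤ) 1 = 0 from rfl, show (![0, 0, 0, 1, 1, 0, 0] : Fin 7 → ℤ) 2 = 0 from rfl, show (![0, 0, 0, 1, 1, 0, 0] : Fin 7 → ℤ) 3 = 1 from rfl, show (![0, 0, 0, 1, 1, 0, 0] : Fin 7 → ℤ) 4 = 1 from rfl, show (![0, 0, 0, 1, 1, 0, 0] : Fin 7 → ℤ) 5 = 0 from rfl, show (![0, 0, 0, 1, 1, 0, 0] : Fin 7 → ℤ) 6 = 0 from rfl, Gv00, Gv01, Gv02, Gv03, Gv04, Gv05, Gv06, Gv10, Gv11,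 Gv12, Gv13, Gv14, Gv15, Gv16, Gv20, Gv21, Gv22, Gv23, Gv24, Gv25, Gv26, Gv30, Gv31, Gv32, Gv33, Gv34, Gv35, Gv36, Gv40, Gv41, Gv42, Gv43, Gv44, Gv45, Gv46, Gv50, Gv51, Gv52, Gv53, Gv54, Gv55, Gv56, Gv60, Gv61, Gv62, Gv63, Gv64, Gv65, Gv66]) (by rw [hpr 5]; norm_num [Fin.sum_univ_seven, show (![0, 0, 0, 1, 1, 0, 0] : Fin 7 → ℤ) 0 = 0 from rfl, show (![0, 0, 0, 1, 1, 0, 0] : Fin 7 → ℤ) 1 = 0 from rfl, show (![0, 0, 0, 1, 1, 0, 0] : Fin 7 → ℤ) 2 = 0 from rfl, show (![0, 0, 0, 1, 1, 0, 0] : Fin 7 → ℤ) 3 = 1 from rfl, show (![0, 0, 0, 1, 1, 0, 0] : Fin 7 → ℤ) 4 = 1 from rfl, show (![0, 0, 0, 1, 1, 0, 0] : Fin 7 → ℤ) 5 = 0 from rfl, show (![0, 0, 0, 1, 1, 0, 0] : Fin 7 → ℤ) 6 = 0 from rfl, Gv00, Gv01, Gv02, Gv03, Gv04, Gv05, Gv06,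 Gv10, Gv11, Gv12, Gv13, Gv14, Gv15, Gv16, Gv20, Gv21, Gv22, Gv23, Gv24, Gv25, Gv26, Gv30, Gv31, Gv32, Gv33, Gv34, Gv35, Gv36, Gv40, Gv41, Gv42, Gv43, Gv44, Gv45, Gv46, Gv50, Gv51, Gv52, Gv53, Gv54, Gv55, Gv56, Gv60, Gv61, Gv62, Gv63, Gv64, Gv65, Gv66]) (by rw [hco1, z1]) (by rw [hco2, z2]) (by rw [hco5, z3])
    · have z1 : b = 0 := by linarith [hb, hc, hg]
      have z2 : c = 0 := by linarith [hb, hc, hg]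
      have z3 : g = 0 := by linarith [hb, hc, hg]
      set dlt := ∑ t, ((![0, 0, 0, 1, 1, 1, 0] : Fin 7 → ℤ) t : ℝ) • sroot t with hdlt
      have hdm : dlt ∈ Phi := by
        refine ⟨⟨![0, 0, 0, 1, 1, 1, 0], rfl⟩, ?_⟩
        rw [hdlt, bform]
        norm_num [Fin.sum_univ_seven, show (![0, 0, 0, 1, 1, 1, 0] : Fin 7 → ℤ) 0 = 0 from rfl, show (![0, 0, 0, 1, 1, 1, 0] : Fin 7 → ℤ) 1 = 0 from rfl, show (![0, 0, 0, 1, 1, 1, 0] : Fin 7 → ℤ) 2 = 0 from rfl, show (![0, 0, 0, 1, 1, 1, 0] : Fin 7 → ℤ) 3 = 1 from rfl, show (![0, 0, 0, 1, 1, 1, 0] : Fin 7 → ℤ) 4 = 1 from rfl, show (![0, 0, 0, 1, 1, 1, 0] : Fin 7 → ℤ) 5 = 1 from rfl, show (![0, 0, 0, 1, 1, 1, 0] : Fin 7 → ℤ) 6 = 0 from rfl, Gv00, Gv01, Gv02, Gv03, Gv04, Gv05, Gv06, Gv10, Gv11, Gv12, Gv13, Gv14, Gv15, Gv16, Gv20,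 Gv21, Gv22, Gv23, Gv24, Gv25, Gv26, Gv30, Gv31, Gv32, Gv33, Gv34, Gv35, Gv36, Gv40, Gv41, Gv42, Gv43, Gv44, Gv45, Gv46, Gv50, Gv51, Gv52, Gv53, Gv54, Gv55, Gv56, Gv60, Gv61, Gv62, Gv63, Gv64, Gv65, Gv66]
      have hpr : ∀ k : Fin 7, ip dlt (sroot k) = ((![0, 0, 0, 1, 1, 1, 0] : Fin 7 → ℤ) 0 : ℝ) * (G 0 k : ℝ)
          + ((![0, 0, 0, 1, 1, 1, 0] : Fin 7 → ℤ) 1 : ℝ) * (G 1 k : ℝ) + ((![0, 0, 0, 1, 1, 1, 0] : Fin 7 → ℤ) 2 : ℝ) * (G 2 k : ℝ)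
          + ((![0, 0, 0, 1, 1, 1, 0] : Fin 7 → ℤ) 3 : ℝ) * (G 3 k : ℝ) + ((![0, 0, 0, 1, 1, 1, 0] : Fin 7 → ℤ) 4 : ℝ) * (G 4 k : ℝ)
          + ((![0, 0, 0, 1, 1, 1, 0] : Fin 7 → ℤ) 5 : ℝ) * (G 5 k : ℝ) + ((![0, 0, 0, 1, 1, 1, 0] : Fin 7 → ℤ) 6 : ℝ) * (G 6 k : ℝ) := by
        intro k
        rw [hdlt, ip_comb_left]
        simp only [Fin.sum_univ_seven, gram]
      exact QUAD (sroot 1) (sroot 2) (sroot 6) dlt (sroot_mem_Phi 1) (sroot_mem_Phi 2) (sroot_mem_Phi 6) hdm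
        (by rw [gram, Gv12]; norm_num) (by rw [gram, Gv16]; norm_num) (by rw [gram, Gv26]; norm_num)
        (by rw [hpr 1]; norm_num [Fin.sum_univ_seven, show (![0, 0, 0, 1, 1, 1, 0] : Fin 7 → ℤ) 0 = 0 from rfl, show (![0, 0, 0, 1, 1, 1, 0] : Fin 7 → ℤ) 1 = 0 from rfl, show (![0, 0, 0, 1, 1, 1, 0] : Fin 7 → ℤ) 2 = 0 from rfl, show (![0, 0, 0, 1, 1, 1, 0] : Fin 7 → ℤ) 3 = 1 from rfl, show (![0, 0, 0, 1, 1, 1, 0] : Fin 7 → ℤ) 4 = 1 from rfl, show (![0, 0, 0, 1, 1, 1, 0] : Fin 7 → ℤ) 5 = 1 from rfl, show (![0, 0, 0, 1, 1, 1, 0] : Fin 7 → ℤ) 6 = 0 from rfl, Gv00, Gv01, Gv02, Gv03, Gv04, Gv05, Gv06, Gv10, Gv11, Gv12, Gv13, Gv14, Gv15, Gv16, Gv20, Gv21, Gv22, Gv23, Gv24, Gv25, Gv26, Gv30, Gv31, Gv32, Gv33, Gv34, Gv35, Gv36, Gv40, Gv41, Gv42, Gv43, Gv44, Gv45, Gv46,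 Gv50, Gv51, Gv52, Gv53, Gv54, Gv55, Gv56, Gv60, Gv61, Gv62, Gv63, Gv64, Gv65, Gv66]) (by rw [hpr 2]; norm_num [Fin.sum_univ_seven, show (![0, 0, 0, 1, 1, 1, 0] : Fin 7 → ℤ) 0 = 0 from rfl, show (![0, 0, 0, 1, 1, 1, 0] : Fin 7 → ℤ) 1 = 0 from rfl, show (![0, 0, 0, 1, 1, 1, 0] : Fin 7 → ℤ) 2 = 0 from rfl, show (![0, 0, 0, 1, 1, 1, 0] : Fin 7 → ℤ) 3 = 1 from rfl, show (![0, 0, 0, 1, 1, 1, 0] : Fin 7 → ℤ) 4 = 1 from rfl, show (![0, 0, 0, 1, 1, 1, 0] : Fin 7 → ℤ) 5 = 1 from rfl, show (![0, 0, 0, 1, 1, 1, 0] : Fin 7 → ℤ) 6 = 0 from rfl, Gv00, Gv01, Gv02, Gv03, Gv04, Gv05, Gv06, Gv10, Gv11, Gv12, Gv13, Gv14, Gv15, Gv16, Gv20, Gv21, Gv22, Gv23, Gv24, Gv25, Gv26, Gv30, Gv31, Gv32, Gv33, Gv34, Gv35, Gv36, Gv40, Gv41, Gv42, Gv43, Gv44,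 Gv45, Gv46, Gv50, Gv51, Gv52, Gv53, Gv54, Gv55, Gv56, Gv60, Gv61, Gv62, Gv63, Gv64, Gv65, Gv66]) (by rw [hpr 6]; norm_num [Fin.sum_univ_seven, show (![0, 0, 0, 1, 1, 1, 0] : Fin 7 → ℤ) 0 = 0 from rfl, show (![0, 0, 0, 1, 1, 1, 0] : Fin 7 → ℤ) 1 = 0 from rfl, show (![0, 0, 0, 1, 1, 1, 0] : Fin 7 → ℤ) 2 = 0 from rfl, show (![0, 0, 0, 1, 1, 1, 0] : Fin 7 → ℤ) 3 = 1 from rfl, show (![0, 0, 0, 1, 1, 1, 0] : Fin 7 → ℤ) 4 = 1 from rfl, show (![0, 0, 0, 1, 1, 1, 0] : Fin 7 → ℤ) 5 = 1 from rfl, show (![0, 0, 0, 1, 1, 1, 0] : Fin 7 → ℤ) 6 = 0 from rfl, Gv00, Gv01, Gv02, Gv03, Gv04, Gv05, Gv06, Gv10, Gv11, Gv12, Gv13, Gv14, Gv15, Gv16, Gv20, Gv21, Gv22, Gv23, Gv24, Gv25, Gv26, Gv30, Gv31, Gv32, Gv33, Gv34, Gv35, Gv36, Gv40, Gv41, Gv42,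 Gv43, Gv44, Gv45, Gv46, Gv50, Gv51, Gv52, Gv53, Gv54, Gv55, Gv56, Gv60, Gv61, Gv62, Gv63, Gv64, Gv65, Gv66]) (by rw [hco1, z1]) (by rw [hco2, z2]) (by rw [hco6, z3])
    · have z1 : c = 0 := by linarith [hc, he, hg]
      have z2 : e = 0 := by linarith [hc, he, hg]
      have z3 : g = 0 := by linarith [hc, he, hg]
      set dlt := ∑ t, ((![1, 1, 2, 2, 1, 1, 0] : Fin 7 → ℤ) t : ℝ) • sroot t with hdlt
      have hdm : dlt ∈ Phi := by
        refine ⟨⟨![1, 1, 2, 2, 1, 1, 0], rfl⟩, ?_⟩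
        rw [hdlt, bform]
        norm_num [Fin.sum_univ_seven, show (![1, 1, 2, 2, 1, 1, 0] : Fin 7 → ℤ) 0 = 1 from rfl, show (![1, 1, 2, 2, 1, 1, 0] : Fin 7 → ℤ) 1 = 1 from rfl, show (![1, 1, 2, 2, 1, 1, 0] : Fin 7 → ℤ) 2 = 2 from rfl, show (![1, 1, 2, 2, 1, 1, 0] : Fin 7 → ℤ) 3 = 2 from rfl, show (![1, 1, 2, 2, 1, 1, 0] : Fin 7 → ℤ) 4 = 1 from rfl, show (![1, 1, 2, 2, 1, 1, 0] : Fin 7 → ℤ) 5 = 1 from rfl, show (![1, 1, 2, 2, 1, 1, 0] : Fin 7 → ℤ) 6 = 0 from rfl, Gv00, Gv01, Gv02, Gv03, Gv04, Gv05, Gv06, Gv10, Gv11, Gv12, Gv13, Gv14, Gv15, Gv16, Gv20, Gv21, Gv22, Gv23, Gv24, Gv25, Gv26, Gv30, Gv31, Gv32, Gv33, Gv34, Gv35, Gv36, Gv40, Gv41, Gv42, Gv43, Gv44, Gv45, Gv46, Gv50, Gv51, Gv52, Gv53, Gv54, Gv55, Gv56, Gv60, Gv61, Gv62, Gv63, Gv64,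 Gv65, Gv66]
      have hpr : ∀ k : Fin 7, ip dlt (sroot k) = ((![1, 1, 2, 2, 1, 1, 0] : Fin 7 → ℤ) 0 : ℝ) * (G 0 k : ℝ)
          + ((![1, 1, 2, 2, 1, 1, 0] : Fin 7 → ℤ) 1 : ℝ) * (G 1 k : ℝ) + ((![1, 1, 2, 2, 1, 1, 0] : Fin 7 → ℤ) 2 : ℝ) * (G 2 k : ℝ)
          + ((![1, 1, 2, 2, 1, 1, 0] : Fin 7 → ℤ) 3 : ℝ) * (G 3 k : ℝ) + ((![1, 1, 2, 2, 1, 1, 0] : Fin 7 → ℤ) 4 : ℝ) * (G 4 k : ℝ)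
          + ((![1, 1, 2, 2, 1, 1, 0] : Fin 7 → ℤ) 5 : ℝ) * (G 5 k : ℝ) + ((![1, 1, 2, 2, 1, 1, 0] : Fin 7 → ℤ) 6 : ℝ) * (G 6 k : ℝ) := by
        intro k
        rw [hdlt, ip_comb_left]
        simp only [Fin.sum_univ_seven, gram]
      exact QUAD (-(sroot 2)) (sroot 4) (sroot 6) dlt (Phi_neg (sroot_mem_Phi 2)) (sroot_mem_Phi 4) (sroot_mem_Phi 6) hdm
        (by rw [ip_neg_left, gram, Gv24]; norm_num) (by rw [ip_neg_left, gram, Gv26]; norm_num) (by rw [gram, Gv46]; norm_num)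
        (by rw [ip_neg_right, hpr 2]; norm_num [Fin.sum_univ_seven, show (![1, 1, 2, 2, 1, 1, 0] : Fin 7 → ℤ) 0 = 1 from rfl, show (![1, 1, 2, 2, 1, 1, 0] : Fin 7 → ℤ) 1 = 1 from rfl, show (![1, 1, 2, 2, 1, 1, 0] : Fin 7 → ℤ) 2 = 2 from rfl, show (![1, 1, 2, 2, 1, 1, 0] : Fin 7 → ℤ) 3 = 2 from rfl, show (![1, 1, 2, 2, 1, 1, 0] : Fin 7 → ℤ) 4 = 1 from rfl, show (![1, 1, 2, 2, 1, 1, 0] : Fin 7 → ℤ) 5 = 1 from rfl, show (![1, 1, 2, 2, 1, 1, 0] : Fin 7 → ℤ) 6 = 0 from rfl, Gv00, Gv01, Gv02, Gv03, Gv04, Gv05, Gv06, Gv10, Gv11, Gv12, Gv13, Gv14, Gv15, Gv16, Gv20, Gv21, Gv22, Gv23, Gv24, Gv25, Gv26, Gv30, Gv31, Gv32, Gv33, Gv34, Gv35, Gv36, Gv40, Gv41, Gv42, Gv43, Gv44, Gv45, Gv46, Gv50, Gv51, Gv52, Gv53, Gv54, Gv55, Gv56, Gv60, Gv61, Gv62,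 Gv63, Gv64, Gv65, Gv66]) (by rw [hpr 4]; norm_num [Fin.sum_univ_seven, show (![1, 1, 2, 2, 1, 1, 0] : Fin 7 → ℤ) 0 = 1 from rfl, show (![1, 1, 2, 2, 1, 1, 0] : Fin 7 → ℤ) 1 = 1 from rfl, show (![1, 1, 2, 2, 1, 1, 0] : Fin 7 → ℤ) 2 = 2 from rfl, show (![1, 1, 2, 2, 1, 1, 0] : Fin 7 → ℤ) 3 = 2 from rfl, show (![1, 1, 2, 2, 1, 1, 0] : Fin 7 → ℤ) 4 = 1 from rfl, show (![1, 1, 2, 2, 1, 1, 0] : Fin 7 → ℤ) 5 = 1 from rfl, show (![1, 1, 2, 2, 1, 1, 0] : Fin 7 → ℤ) 6 = 0 from rfl, Gv00, Gv01, Gv02, Gv03, Gv04, Gv05, Gv06, Gv10, Gv11, Gv12, Gv13, Gv14, Gv15, Gv16, Gv20, Gv21, Gv22, Gv23, Gv24, Gv25, Gv26, Gv30, Gv31, Gv32, Gv33, Gv34, Gv35, Gv36, Gv40, Gv41, Gv42, Gv43, Gv44, Gv45, Gv46, Gv50, Gv51, Gv52, Gv53, Gv54, Gv55, Gv56, Gv60,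 Gv61, Gv62, Gv63, Gv64, Gv65, Gv66]) (by rw [hpr 6]; norm_num [Fin.sum_univ_seven, show (![1, 1, 2, 2, 1, 1, 0] : Fin 7 → ℤ) 0 = 1 from rfl, show (![1, 1, 2, 2, 1, 1, 0] : Fin 7 → ℤ) 1 = 1 from rfl, show (![1, 1, 2, 2, 1, 1, 0] : Fin 7 → ℤ) 2 = 2 from rfl, show (![1, 1, 2, 2, 1, 1, 0] : Fin 7 → ℤ) 3 = 2 from rfl, show (![1, 1, 2, 2, 1, 1, 0] : Fin 7 → ℤ) 4 = 1 from rfl, show (![1, 1, 2, 2, 1, 1, 0] : Fin 7 → ℤ) 5 = 1 from rfl, show (![1, 1, 2, 2, 1, 1, 0] : Fin 7 → ℤ) 6 = 0 from rfl, Gv00, Gv01, Gv02, Gv03, Gv04, Gv05, Gv06, Gv10, Gv11, Gv12, Gv13, Gv14, Gv15, Gv16, Gv20, Gv21, Gv22, Gv23, Gv24, Gv25, Gv26, Gv30, Gv31, Gv32, Gv33, Gv34, Gv35, Gv36, Gv40, Gv41, Gv42, Gv43, Gv44, Gv45, Gv46, Gv50, Gv51, Gv52, Gv53, Gv54, Gv55,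 Gv56, Gv60, Gv61, Gv62, Gv63, Gv64, Gv65, Gv66]) (by rw [ip_neg_right, hco2, z1]; norm_num) (by rw [hco4, z2]) (by rw [hco6, z3])
  obtain ⟨δ, hδ, hz, ho⟩ := key
  exact absurd ho (dominant_not_orth fw hfw_pair hδ hz hcon)


end E7
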